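/- arXiv:1102.3998 — 8 statements merged into one kernel-verified Lean document; each statement's English description precedes it below -/
import Mathlib

section
/- 𝓑_ap = 𝓓_{L^∞} ∩ C_ap: if f : ℝ → ℂ is smooth, every derivative of f is bounded on ℝ, and f itself is almost periodic (Bochner), then every derivative f^{(j)} (j ∈ ℕ) is almost periodic (Bochner), i.e. f ∈ 𝓑_ap; conversely every f ∈ 𝓑_ap is smooth with all derivatives bounded and is almost periodic. -/
open Filter MeasureTheory Topology

noncomputable section

/-- A function `f : ℝ → ℂ` is almost periodic in the sense of Bochner: it is continuous
and from every sequence of real translates one can extract a subsequence along which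
the translates converge uniformly on `ℝ`. -/
def AlmostPeriodic (f : ℝ → ℂ) : Prop :=
  Continuous f ∧ ∀ h : ℕ → ℝ, ∃ φ : ℕ → ℕ, StrictMono φ ∧ ∃ g : ℝ → ℂ,
    TendstoUniformly (fun k x => f (x + h (φ k))) g atTop

/-- `f ∈ 𝓑_ap` : `f` is smooth and every derivative of `f` is almost periodic. -/
def BAp (f : ℝ → ℂ) : Prop :=
  ContDiff ℝ (⊤ : ℕ∞) f ∧ ∀ j : ℕ, AlmostPeriodic (iteratedDeriv j f)

/-- The seminorm `|f|_{k,∞} = Σ_{j ≤ k} sup_{x ∈ ℝ} ‖f^{(j)}(x)‖`. -/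
def apSeminorm (k : ℕ) (f : ℝ → ℂ) : ℝ :=
  ∑ j ∈ Finset.range (k + 1), ⨆ x : ℝ, ‖iteratedDeriv j f x‖

/-- A net `(u_ε)_{ε ∈ (0,1]}` is moderate. -/
def Moderate (u : ℝ → ℝ → ℂ) : Prop :=
  ∀ k : ℕ, ∃ m : ℕ, ∃ C > 0, ∃ ε₀ ∈ Set.Ioc (0:ℝ) 1,
    ∀ ε ∈ Set.Ioc (0:ℝ) 1, ε ≤ ε₀ → apSeminorm k (u ε) ≤ C / ε ^ m

/-- A net `(u_ε)_{ε ∈ (0,1]}` is negligible. -/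
def Negligible (u : ℝ → ℝ → ℂ) : Prop :=
  ∀ k m : ℕ, ∃ C > 0, ∃ ε₀ ∈ Set.Ioc (0:ℝ) 1,
    ∀ ε ∈ Set.Ioc (0:ℝ) 1, ε ≤ ε₀ → apSeminorm k (u ε) ≤ C * ε ^ m

/-- An almost periodic function is bounded. -/
lemma almostPeriodic_bounded {F : ℝ → ℂ} (hF : AlmostPeriodic F) :
    ∃ C : ℝ, ∀ x : ℝ, ‖F x‖ ≤ C := by
  by_contra hc
  push_neg at hc
  choose h hh using fun n : ℕ => hc n
  obtain ⟨φ, hφ, g, hg⟩ := hF.2 h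
  have h0 : Tendsto (fun k => F (0 + h (φ k))) atTop (𝓝 (g 0)) := hg.tendsto_at 0
  have h1 : Tendsto (fun k => ‖F (0 + h (φ k))‖) atTop (𝓝 ‖g 0‖) := h0.norm
  have h2 : Tendsto (fun k => ‖F (0 + h (φ k))‖) atTop atTop := by
    apply tendsto_atTop_mono (f := fun k : ℕ => (k : ℝ))
    · intro k
      simp only [zero_add]
      calc (k : ℝ) ≤ (φ k : ℝ) := by exact_mod_cast hφ.le_apply
        _ ≤ ‖F (h (φ k))‖ := (hh (φ k)).le
    · exact tendsto_natCast_atTop_atTop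
  exact not_tendsto_nhds_of_tendsto_atTop h2 _ h1

/-- A Landau-type inequality. -/
lemma landau {g g' g'' : ℝ → ℂ} (hg : ∀ x, HasDerivAt g (g' x) x)
    (hg' : ∀ x, HasDerivAt g' (g'' x) x) {A B t : ℝ}
    (hA : ∀ x, ‖g x‖ ≤ A) (hB : ∀ x, ‖g'' x‖ ≤ B) (ht : 0 < t) (x : ℝ) :
    ‖g' x‖ ≤ 2 * A / t + B * t := by
  have hcont : Continuous g' :=
    (Differentiable.continuous fun y => (hg' y).differentiableAt)
  have hint : IntervalIntegrable g' MeasureTheory.volume x (x + t) :=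
    hcont.intervalIntegrable _ _
  have key : ∫ s in x..(x + t), g' s = g (x + t) - g x :=
    intervalIntegral.integral_eq_sub_of_hasDerivAt (fun s _ => hg s) hint
  have key2 : ∫ s in x..(x + t), (g' x - g' s) = t • g' x - (g (x + t) - g x) := by
    rw [intervalIntegral.integral_sub (intervalIntegrable_const) hint,
      intervalIntegral.integral_const, key]
    congr 2
    ring_nf
  have lip : ∀ s ∈ Set.uIoc x (x + t), ‖g' x - g' s‖ ≤ B * t := by
    intro s hs
    rw [Set.uIoc_of_le (by linarith)] at hs
    have := convex_univ.norm_image_sub_le_of_norm_hasDerivWithin_le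
      (f := g') (f' := g'') (fun y _ => (hg' y).hasDerivWithinAt)
      (fun y _ => hB y) (Set.mem_univ s) (Set.mem_univ x)
    refine this.trans ?_
    have hB0 : (0:ℝ) ≤ B := (norm_nonneg _).trans (hB x)
    have hx : ‖x - s‖ ≤ t := by
      rw [Real.norm_eq_abs, abs_of_nonpos (by linarith [hs.1])]
      linarith [hs.1, hs.2]
    nlinarith [norm_nonneg (x - s)]
  have hnorm : ‖∫ s in x..(x + t), (g' x - g' s)‖ ≤ B * t * |x + t - x| :=
    intervalIntegral.norm_integral_le_of_norm_le_const lip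
  rw [key2] at hnorm
  have habs : |x + t - x| = t := by rw [abs_of_pos (by linarith)]; ring_nf
  rw [habs] at hnorm
  have hts : ‖t • g' x‖ = t * ‖g' x‖ := by
    rw [norm_smul, Real.norm_eq_abs, abs_of_pos ht]
  have h1 : t * ‖g' x‖ ≤ 2 * A + B * t * t := by
    calc t * ‖g' x‖ = ‖t • g' x‖ := hts.symm
      _ = ‖t • g' x - (g (x + t) - g x) + (g (x + t) - g x)‖ := by
          rw [sub_add_cancel]
      _ ≤ ‖t • g' x - (g (x + t) - g x)‖ + ‖g (x + t) - g x‖ := norm_add_le _ _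
      _ ≤ B * t * t + (‖g (x + t)‖ + ‖g x‖) := by
          gcongr
          exact norm_sub_le _ _
      _ ≤ B * t * t + (A + A) := by
          gcongr <;> [exact hA _; exact hA _]
      _ = 2 * A + B * t * t := by ring
  rw [div_add' _ _ _ ht.ne', le_div_iff₀ ht]
  nlinarith
  
/-- If the translates of `F` are uniformly Cauchy and `F''` is bounded, then the translates
of `F'` are uniformly Cauchy. -/
lemma cauchy_deriv_step {F F' F'' : ℝ → ℂ} (hF : ∀ x, HasDerivAt F (F' x) x)
    (hF' : ∀ x, HasDerivAt F' (F'' x) x) {M : ℝ} (hM : ∀ x, ‖F'' x‖ ≤ M)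
    {a : ℕ → ℝ}
    (h : UniformCauchySeqOn (fun k x => F (x + a k)) atTop Set.univ) :
    UniformCauchySeqOn (fun k x => F' (x + a k)) atTop Set.univ := by
  have hM0 : (0:ℝ) ≤ M := (norm_nonneg _).trans (hM 0)
  rw [Metric.uniformCauchySeqOn_iff] at h ⊢
  intro ε hε
  set t : ℝ := ε / (4 * M + 4) with htdef
  have ht : 0 < t := div_pos hε (by linarith)
  obtain ⟨N, hN⟩ := h (ε * t / 4) (by positivity)
  refine ⟨N, fun m hm n hn x _ => ?_⟩
  -- apply landau to the difference
  have hA : ∀ y, ‖F (y + a m) - F (y + a n)‖ ≤ ε * t / 4 := by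
    intro y
    have := hN m hm n hn y (Set.mem_univ y)
    rw [dist_eq_norm] at this
    exact this.le
  have hg : ∀ y, HasDerivAt (fun y => F (y + a m) - F (y + a n))
      (F' (y + a m) - F' (y + a n)) y := fun y =>
    ((hF _).comp_add_const y (a m)).sub ((hF _).comp_add_const y (a n))
  have hg' : ∀ y, HasDerivAt (fun y => F' (y + a m) - F' (y + a n))
      (F'' (y + a m) - F'' (y + a n)) y := fun y =>
    ((hF' _).comp_add_const y (a m)).sub ((hF' _).comp_add_const y (a n))
  have hB : ∀ y, ‖F'' (y + a m) - F'' (y + a n)‖ ≤ 2 * M := fun y =>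
    (norm_sub_le _ _).trans (by linarith [hM (y + a m), hM (y + a n)])
  have := landau hg hg' hA hB ht x
  rw [dist_eq_norm]
  calc ‖F' (x + a m) - F' (x + a n)‖ ≤ 2 * (ε * t / 4) / t + 2 * M * t := this
    _ = ε / 2 + 2 * M * t := by rw [mul_div_assoc, mul_comm]; field_simp; ring
    _ < ε := by
        have key : (4 * M + 4) * t = ε := by
          rw [htdef]; field_simp
        nlinarith

lemma hasDerivAt_iteratedDeriv {f : ℝ → ℂ} (hs : ContDiff ℝ (⊤ : ℕ∞) f) (j : ℕ) (x : ℝ) :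
    HasDerivAt (iteratedDeriv j f) (iteratedDeriv (j + 1) f x) x := by
  rw [iteratedDeriv_succ]
  exact ((hs.differentiable_iteratedDeriv j
    (by exact_mod_cast (by simp : (j:ℕ∞) < ⊤))) x).hasDerivAt

/-- `𝓑_ap = 𝓓_{L^∞} ∩ C_ap`. -/
theorem bap_eq_DLinfty_inter_Cap (f : ℝ → ℂ) :
    BAp f ↔ (ContDiff ℝ (⊤ : ℕ∞) f ∧
      (∀ j : ℕ, ∃ C : ℝ, ∀ x : ℝ, ‖iteratedDeriv j f x‖ ≤ C) ∧
      AlmostPeriodic f) := by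
  constructor
  · rintro ⟨hs, hap⟩
    refine ⟨hs, fun j => almostPeriodic_bounded (hap j), ?_⟩
    simpa [iteratedDeriv_zero] using hap 0
  · rintro ⟨hs, hb, hap⟩
    refine ⟨hs, fun j => ?_⟩
    refine ⟨hs.continuous_iteratedDeriv j (by exact_mod_cast le_top), fun h => ?_⟩
    obtain ⟨φ, hφ, g, hg⟩ := hap.2 h
    refine ⟨φ, hφ, ?_⟩
    have cauchy : ∀ j : ℕ,
        UniformCauchySeqOn (fun k x => iteratedDeriv j f (x + h (φ k))) atTop Set.univ := by
      intro j
      induction j with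
      | zero =>
        have := (tendstoUniformlyOn_univ.2 hg).uniformCauchySeqOn
        simpa [iteratedDeriv_zero] using this
      | succ j ih =>
        obtain ⟨M, hM⟩ := hb (j + 2)
        exact cauchy_deriv_step (hasDerivAt_iteratedDeriv hs j)
          (hasDerivAt_iteratedDeriv hs (j + 1)) hM ih
    have hc := cauchy j
    have hlim : ∀ x : ℝ, ∃ L : ℂ,
        Tendsto (fun k => iteratedDeriv j f (x + h (φ k))) atTop (𝓝 L) :=
      fun x => cauchySeq_tendsto_of_complete (hc.cauchySeq (Set.mem_univ x))
    choose G hG using hlim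
    exact ⟨G, tendstoUniformlyOn_univ.1
      (hc.tendstoUniformlyOn_of_tendsto fun x _ => hG x)⟩
end
end

section
/- If v : ℝ → ℂ is smooth with all derivatives bounded on ℝ, and for every smooth compactly supported function φ : ℝ → ℂ the convolution v * φ is almost periodic (Bochner), then v belongs to 𝓑_ap, i.e. every derivative of v is almost periodic (Bochner). -/
open Filter MeasureTheory Topology

noncomputable section

/-!
Bochner's condition says that the orbit `{f (· + a) | a ∈ ℝ}` is relatively compact, i.e. totally
bounded, in the space `ℝ →ᵤ ℂ` of uniform convergence. Total boundedness passes to uniform limits,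
so almost periodic functions are closed under uniform convergence. Since `v'` is bounded, `v` is
uniformly continuous and hence the uniform limit of its mollifications `v * φₙ`, which are almost
periodic by hypothesis. If `f` is almost periodic and `f''` is bounded by `M`, then `f'` is the
uniform limit of the almost periodic difference quotients `(f (· + δ) - f) / δ`, with error at most
`M δ`; induction on the order of the derivative finishes the proof.
-/

open scoped UniformConvergence Convolution

/-- A sequence of pairwise `V`-far points has no Cauchy subsequence. -/
theorem TotallyBounded.of_forall_exists_tendsto_subseq {X : Type*} [UniformSpace X] {s : Set X}
    (h : ∀ u : ℕ → X, (∀ n, u n ∈ s) →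
      ∃ a, ∃ φ : ℕ → ℕ, StrictMono φ ∧ Tendsto (u ∘ φ) atTop (𝓝 a)) :
    TotallyBounded s := by
  intro V hV
  by_contra! hcover
  obtain ⟨u, hu⟩ := Set.seq_of_forall_finite_exists
    (P := fun c t => c ∈ s ∧ ∀ y ∈ t, (c, y) ∉ V) fun t ht => by
      simpa [Set.not_subset] using hcover t ht
  obtain ⟨a, φ, hφ, hlim⟩ := h u fun n => (hu n).1
  obtain ⟨N, hN⟩ := hlim.cauchySeq.mem_entourage hV
  exact (hu (φ (N + 1))).2 _ ⟨φ N, hφ (Nat.lt_succ_self N), rfl⟩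
    (hN (N + 1) N (Nat.le_succ N) le_rfl)

def uniformTranslate (f : ℝ → ℂ) (a : ℝ) : ℝ →ᵤ ℂ := UniformFun.ofFun fun x => f (x + a)

theorem almostPeriodic_iff_totallyBounded {f : ℝ → ℂ} :
    AlmostPeriodic f ↔ Continuous f ∧ TotallyBounded (Set.range (uniformTranslate f)) := by
  have htendsto : ∀ (h : ℕ → ℝ) (φ : ℕ → ℕ) (g : ℝ → ℂ),
      TendstoUniformly (fun k x => f (x + h (φ k))) g atTop ↔
        Tendsto (uniformTranslate f ∘ h ∘ φ) atTop (𝓝 (UniformFun.ofFun g)) :=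
    fun h φ g => (UniformFun.tendsto_iff_tendstoUniformly).symm
  refine and_congr_right fun _ => ⟨fun hap => ?_, fun htb h => ?_⟩
  · refine .of_forall_exists_tendsto_subseq fun u hu => ?_
    choose h hh using hu
    obtain ⟨φ, hφ, g, hg⟩ := hap h
    refine ⟨UniformFun.ofFun g, φ, hφ, ?_⟩
    rw [show u = uniformTranslate f ∘ h from funext fun n => (hh n).symm]
    exact (htendsto h φ g).1 hg
  · have hcompact := htb.closure.isCompact_of_isClosed isClosed_closure
    obtain ⟨a, -, φ, hφ, hlim⟩ := hcompact.tendsto_subseq (x := uniformTranslate f ∘ h)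
      fun n => subset_closure ⟨h n, rfl⟩
    exact ⟨φ, hφ, UniformFun.toFun a, (htendsto h φ _).2 hlim⟩

theorem edist_uniformTranslate_le (f g : ℝ → ℂ) (a : ℝ) :
    edist (uniformTranslate f a) (uniformTranslate g a) ≤
      edist (UniformFun.ofFun f) (UniformFun.ofFun g) :=
  UniformFun.edist_le.2 fun x => UniformFun.edist_eval_le (x := x + a)

theorem AlmostPeriodic.of_tendstoUniformly {F : ℕ → ℝ → ℂ} {f : ℝ → ℂ}
    (hF : ∀ n, AlmostPeriodic (F n)) (hlim : TendstoUniformly F f atTop) : AlmostPeriodic f := by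
  rw [almostPeriodic_iff_totallyBounded]
  refine ⟨hlim.continuous (.of_forall fun n => (hF n).1),
    EMetric.totallyBounded_iff.2 fun ε hε => ?_⟩
  have hlim' : Tendsto (fun n => UniformFun.ofFun (F n)) atTop (𝓝 (UniformFun.ofFun f)) :=
    UniformFun.tendsto_iff_tendstoUniformly.2 hlim
  obtain ⟨n, hn⟩ := ((EMetric.tendsto_nhds.1 hlim') (ε / 2) (ENNReal.half_pos hε.ne')).exists
  obtain ⟨t, ht, hcover⟩ := EMetric.totallyBounded_iff.1
    (almostPeriodic_iff_totallyBounded.1 (hF n)).2 (ε / 2) (ENNReal.half_pos hε.ne')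
  refine ⟨t, ht, ?_⟩
  rintro _ ⟨a, rfl⟩
  obtain ⟨y, hy, hay⟩ := Set.mem_iUnion₂.1 (hcover ⟨a, rfl⟩)
  refine Set.mem_iUnion₂.2 ⟨y, hy, ?_⟩
  calc edist (uniformTranslate f a) y
      ≤ edist (uniformTranslate f a) (uniformTranslate (F n) a) +
          edist (uniformTranslate (F n) a) y := edist_triangle _ _ _
    _ < ε / 2 + ε / 2 := by
        gcongr
        · exact (edist_uniformTranslate_le f (F n) a).trans_lt (by rw [edist_comm]; exact hn)
        · exact hay
    _ = ε := ENNReal.add_halves ε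

theorem AlmostPeriodic.const_mul_sub_comp_add {f : ℝ → ℂ} (hf : AlmostPeriodic f) (c : ℂ) (δ : ℝ) :
    AlmostPeriodic (fun x => c * (f (x + δ) - f x)) := by
  refine ⟨continuous_const.mul ((hf.1.comp (continuous_add_const δ)).sub hf.1), fun h => ?_⟩
  obtain ⟨φ, hφ, g, hg⟩ := hf.2 h
  refine ⟨φ, hφ, fun x => c * (g (x + δ) - g x), ?_⟩
  convert (uniformContinuous_const_smul c).comp_tendstoUniformly ((hg.comp (· + δ)).sub hg)
    using 1 <;> ext <;> simp only [Function.comp_apply, Pi.sub_apply, smul_eq_mul, add_right_comm]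

theorem norm_sub_sub_smul_deriv_le {E : Type*} [NormedAddCommGroup E] [NormedSpace ℝ E]
    {f : ℝ → E} {M : ℝ} (hf : Differentiable ℝ f) (hf' : Differentiable ℝ (deriv f))
    (hM : ∀ y, ‖deriv (deriv f) y‖ ≤ M) (x : ℝ) {δ : ℝ} (hδ : 0 ≤ δ) :
    ‖f (x + δ) - f x - δ • deriv f x‖ ≤ M * δ ^ 2 := by
  have hderiv : ∀ t ∈ Set.Icc x (x + δ), HasDerivWithinAt (fun t => f t - t • deriv f x)
      (deriv f t - deriv f x) (Set.Icc x (x + δ)) t := fun t _ =>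
    ((hf t).hasDerivAt.sub ((hasDerivAt_id t).smul_const _)).hasDerivWithinAt.congr_deriv
      (by rw [one_smul])
  have hbound : ∀ t ∈ Set.Ico x (x + δ), ‖deriv f t - deriv f x‖ ≤ M * δ := fun t ht =>
    calc ‖deriv f t - deriv f x‖ ≤ M * ‖t - x‖ :=
          Convex.norm_image_sub_le_of_norm_deriv_le (fun y _ => hf' y) (fun y _ => hM y)
            convex_univ trivial trivial
      _ ≤ M * δ := by
          gcongr
          · exact (norm_nonneg _).trans (hM x)
          · rw [Real.norm_of_nonneg (by linarith [ht.1])]; linarith [ht.2]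
  have := norm_image_sub_le_of_norm_deriv_le_segment' hderiv hbound (x + δ) ⟨by linarith, le_rfl⟩
  calc ‖f (x + δ) - f x - δ • deriv f x‖
      = ‖(f (x + δ) - (x + δ) • deriv f x) - (f x - x • deriv f x)‖ := by congr 1; module
    _ ≤ M * δ * (x + δ - x) := this
    _ = M * δ ^ 2 := by ring

theorem AlmostPeriodic.deriv_of_norm_deriv_deriv_le {f : ℝ → ℂ} (hap : AlmostPeriodic f)
    (hf : ContDiff ℝ 2 f) {M : ℝ} (hM : ∀ x, ‖deriv (deriv f) x‖ ≤ M) :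
    AlmostPeriodic (deriv f) := by
  set δ : ℕ → ℝ := fun n => 1 / (n + 1)
  have hδ : ∀ n, 0 < δ n := fun n => by positivity
  refine .of_tendstoUniformly (fun n => hap.const_mul_sub_comp_add (δ n : ℂ)⁻¹ (δ n)) ?_
  have hMδ : Tendsto (fun n => M * δ n) atTop (𝓝 0) := by
    simpa [δ] using tendsto_one_div_add_atTop_nhds_zero_nat.const_mul M
  refine Metric.tendstoUniformly_iff.2 fun ε hε => ?_
  filter_upwards [hMδ.eventually_lt_const hε] with n hn x
  calc dist (deriv f x) ((δ n : ℂ)⁻¹ * (f (x + δ n) - f x))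
      = ‖(δ n : ℂ)⁻¹ * (f (x + δ n) - f x - δ n • deriv f x)‖ := by
        rw [dist_comm, dist_eq_norm, Complex.real_smul]
        congr 1
        field_simp [(hδ n).ne']
    _ = (δ n)⁻¹ * ‖f (x + δ n) - f x - δ n • deriv f x‖ := by
        rw [norm_mul, norm_inv, Complex.norm_real, Real.norm_of_nonneg (hδ n).le]
    _ ≤ (δ n)⁻¹ * (M * δ n ^ 2) := by
        gcongr
        exact norm_sub_sub_smul_deriv_le (hf.differentiable two_ne_zero)
          hf.differentiable_deriv_two hM x (hδ n).le
    _ = M * δ n := by field_simp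
    _ < ε := hn

theorem UniformContinuous.tendstoUniformly_normed_convolution {G E ι : Type*}
    [NormedAddCommGroup G] [NormedSpace ℝ G] [FiniteDimensional ℝ G] [MeasurableSpace G]
    [BorelSpace G] [NormedAddCommGroup E] [NormedSpace ℝ E] [CompleteSpace E]
    {μ : Measure G} [μ.IsAddHaarMeasure] {g : G → E} (hg : UniformContinuous g)
    {l : Filter ι} {φ : ι → ContDiffBump (0 : G)} (hφ : Tendsto (fun i => (φ i).rOut) l (𝓝 0)) :
    TendstoUniformly (fun i => ((φ i).normed μ ⋆[ContinuousLinearMap.lsmul ℝ ℝ, μ] g : G → E))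
      g l := by
  refine Metric.tendstoUniformly_iff.2 fun ε hε => ?_
  obtain ⟨δ, hδ, hgδ⟩ := Metric.uniformContinuous_iff.1 hg (ε / 2) (half_pos hε)
  filter_upwards [hφ.eventually_lt_const hδ] with i hi x
  rw [dist_comm]
  exact ((φ i).dist_normed_convolution_le hg.continuous.aestronglyMeasurable
    fun y hy => (hgδ ((Metric.mem_ball.1 hy).trans hi)).le).trans_lt (half_lt_self hε)

theorem AlmostPeriodic.of_uniformContinuous_of_conv {v : ℝ → ℂ} (hv : UniformContinuous v)
    (hconv : ∀ φ : ℝ → ℂ, ContDiff ℝ (⊤ : ℕ∞) φ → HasCompactSupport φ →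
      AlmostPeriodic (fun x => ∫ y : ℝ, v (x - y) * φ y)) :
    AlmostPeriodic v := by
  let φ (n : ℕ) : ContDiffBump (0 : ℝ) :=
    ⟨1 / (n + 2), 1 / (n + 1), by positivity, by gcongr; linarith⟩
  refine .of_tendstoUniformly (fun n => hconv (fun y => ((φ n).normed volume y : ℂ))
    (Complex.ofRealCLM.contDiff.comp (φ n).contDiff_normed)
    ((φ n).hasCompactSupport_normed.comp_left Complex.ofReal_zero)) ?_
  convert hv.tendstoUniformly_normed_convolution (μ := volume) (φ := φ)
    tendsto_one_div_add_atTop_nhds_zero_nat using 1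
  ext n x
  simp only [convolution_lsmul, Complex.real_smul, mul_comm]

/-- if `v ∈ 𝓓_{L^∞}` and `v * φ ∈ C_ap` for all test functions `φ`,
then `v ∈ 𝓑_ap`. -/
theorem bap_of_conv_ap (v : ℝ → ℂ) (hv : ContDiff ℝ (⊤ : ℕ∞) v)
    (hbd : ∀ j : ℕ, ∃ C : ℝ, ∀ x : ℝ, ‖iteratedDeriv j v x‖ ≤ C)
    (hconv : ∀ φ : ℝ → ℂ, ContDiff ℝ (⊤ : ℕ∞) φ → HasCompactSupport φ →
      AlmostPeriodic (fun x => ∫ y : ℝ, v (x - y) * φ y)) :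
    BAp v := by
  refine ⟨hv, fun j => ?_⟩
  induction j with
  | zero =>
    obtain ⟨C, hC⟩ := hbd 1
    have hlip : LipschitzWith C.toNNReal v :=
      lipschitzWith_of_nnnorm_deriv_le (hv.differentiable (by simp)) fun x =>
        NNReal.le_toNNReal_of_coe_le (by simpa using hC x)
    simpa using AlmostPeriodic.of_uniformContinuous_of_conv hlip.uniformContinuous hconv
  | succ j ih =>
    obtain ⟨M, hM⟩ := hbd (j + 2)
    have hsmooth : ContDiff ℝ 2 (iteratedDeriv j v) := by
      rw [iteratedDeriv_eq_iterate]
      exact (hv.iterate_deriv j).of_le (WithTop.coe_le_coe.2 le_top)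
    rw [iteratedDeriv_succ]
    exact ih.deriv_of_norm_deriv_deriv_le hsmooth fun x => by
      simpa only [iteratedDeriv_succ] using hM x
end
end

section
/- Let m ∈ ℕ, let f_0, …, f_m : ℝ → ℂ be almost periodic (Bochner) functions, and let ρ : ℝ → ℂ be a Schwartz function. For ε ∈ (0,1] define u_ε(x) = Σ_{j≤m} ε^{−j} ∫_ℝ f_j(x − εy) ρ^{(j)}(y) dy (which is the regularization (Σ_j f_j^{(j)}) * ρ_ε of the almost periodic distribution Σ_j f_j^{(j)}, where ρ_ε(x) = ε^{−1}ρ(x/ε)). Then each u_ε belongs to 𝓑_ap and the net (u_ε)_{ε∈(0,1]} is moderate: for every k ∈ ℕ there exist m' ∈ ℕ, C > 0 and ε₀ ∈ (0,1] with |u_ε|_{k,∞} ≤ C ε^{−m'} for all ε ≤ ε₀. -/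
/-!
Substituting `y ↦ y + x / ε` moves `x` into the Schwartz factor, so one may differentiate under
the integral: the derivative of the regularization of `ρ` is `ε⁻¹` times the regularization of
`ρ'`, and the `n`-th derivative is `ε⁻ⁿ` times the regularization of `ρ⁽ⁿ⁾`. Each summand
`f_j ⋆ (ρ⁽ⁿ⁺ʲ⁾)_ε` commutes with translations and is Lipschitz for the sup norm, so it inherits
almost periodicity from `f_j`, and it is bounded by `sup ‖f_j‖ · ‖ρ⁽ⁿ⁺ʲ⁾‖_{L¹}`; for `ε ≤ 1`
this gives `|u_ε|_{k,∞} = O(ε^{-(k+m)})`.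
-/

open Filter MeasureTheory Topology

noncomputable section

namespace AlmostPeriodic

theorem exists_norm_le {f : ℝ → ℂ} (hf : AlmostPeriodic f) : ∃ M, ∀ x, ‖f x‖ ≤ M := by
  by_contra! hunb
  choose x hx using fun n : ℕ => hunb n
  obtain ⟨φ, hφ, g, hg⟩ := hf.2 x
  have hbdd : Tendsto (fun k => ‖f (0 + x (φ k))‖) atTop (𝓝 ‖g 0‖) := (hg.tendsto_at 0).norm
  refine not_tendsto_atTop_of_tendsto_nhds hbdd (tendsto_atTop_mono (fun k => ?_)
    (tendsto_natCast_atTop_atTop.comp hφ.tendsto_atTop))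
  simpa using (hx (φ k)).le

theorem add {f g : ℝ → ℂ} (hf : AlmostPeriodic f) (hg : AlmostPeriodic g) :
    AlmostPeriodic (f + g) := by
  refine ⟨hf.1.add hg.1, fun h => ?_⟩
  obtain ⟨φ, hφ, F, hF⟩ := hf.2 h
  obtain ⟨ψ, hψ, G, hG⟩ := hg.2 (h ∘ φ)
  have hF' : TendstoUniformly (fun k x => f (x + h (φ (ψ k)))) F atTop :=
    fun u hu => hψ.tendsto_atTop.eventually (hF u hu)
  refine ⟨φ ∘ ψ, hφ.comp hψ, F + G, UniformFun.tendsto_iff_tendstoUniformly.1 ?_⟩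
  -- uniform convergence is convergence in the topological additive group `ℝ →ᵤ ℂ`
  exact (UniformFun.tendsto_iff_tendstoUniformly.2 hF').add
    (UniformFun.tendsto_iff_tendstoUniformly.2 hG)

theorem const_smul {f : ℝ → ℂ} (hf : AlmostPeriodic f) (c : ℝ) : AlmostPeriodic (c • f) := by
  refine ⟨hf.1.const_smul c, fun h => ?_⟩
  obtain ⟨φ, hφ, g, hg⟩ := hf.2 h
  exact ⟨φ, hφ, c • g, (uniformContinuous_const_smul c).comp_tendstoUniformly hg⟩

theorem zero : AlmostPeriodic 0 :=
  ⟨continuous_const, fun _ => ⟨id, strictMono_id, 0, tendsto_const_nhds.tendstoUniformly_const⟩⟩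

theorem sum {ι : Type*} {s : Finset ι} {F : ι → ℝ → ℂ} (hF : ∀ i ∈ s, AlmostPeriodic (F i)) :
    AlmostPeriodic (∑ i ∈ s, F i) :=
  Finset.sum_induction F AlmostPeriodic (fun _ _ => add) zero hF

end AlmostPeriodic

section IntertwiningDeriv

variable {α F : Type*} [NormedAddCommGroup F] [NormedSpace ℝ F] {D : α → α} {T : α → ℝ → F}
  {c : ℝ}

theorem iteratedDeriv_eq_pow_smul_of_hasDerivAt (hT : ∀ a x, HasDerivAt (T a) (c • T (D a) x) x)
    (n : ℕ) (a : α) : iteratedDeriv n (T a) = c ^ n • T (D^[n] a) := by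
  induction n generalizing a with
  | zero => simp
  | succ n ih =>
    have hderiv : deriv (T a) = c • T (D a) := funext fun x => (hT a x).deriv
    ext x
    rw [iteratedDeriv_succ', hderiv, iteratedDeriv_const_smul_field, ih, Pi.smul_apply,
      Pi.smul_apply, smul_smul, pow_succ', Function.iterate_succ_apply]

theorem contDiff_of_hasDerivAt_smul (hT : ∀ a x, HasDerivAt (T a) (c • T (D a) x) x) (a : α) :
    ContDiff ℝ (⊤ : ℕ∞) (T a) := by
  refine contDiff_of_differentiable_iteratedDeriv fun n _ => ?_
  rw [iteratedDeriv_eq_pow_smul_of_hasDerivAt hT]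
  exact fun x => ((hT _ x).differentiableAt).const_smul _

end IntertwiningDeriv

namespace SchwartzMap

variable {𝕜 F : Type*} [RCLike 𝕜] [NormedAddCommGroup F] [NormedSpace ℝ F] [NormedSpace 𝕜 F]

theorem coe_iterate_derivCLM (n : ℕ) (ψ : 𝓢(ℝ, F)) :
    ⇑((derivCLM 𝕜 F)^[n] ψ) = iteratedDeriv n ψ := by
  induction n generalizing ψ with
  | zero => simp
  | succ n ih =>
    rw [Function.iterate_succ_apply, ih, iteratedDeriv_succ']
    congr 1

theorem exists_norm_add_le_inv_one_add_sq (ψ : 𝓢(ℝ, F)) :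
    ∃ D, ∀ t s : ℝ, |s| ≤ 1 → ‖ψ (t + s)‖ ≤ D * (1 + t ^ 2)⁻¹ := by
  refine ⟨3 * (SchwartzMap.seminorm ℝ 0 0 ψ + SchwartzMap.seminorm ℝ 2 0 ψ), fun t s hs => ?_⟩
  set w := t + s
  have h₀ : ‖ψ w‖ ≤ SchwartzMap.seminorm ℝ 0 0 ψ := norm_le_seminorm ℝ ψ w
  have h₂ : w ^ 2 * ‖ψ w‖ ≤ SchwartzMap.seminorm ℝ 2 0 ψ := by
    simpa [Real.norm_eq_abs, sq_abs] using norm_pow_mul_le_seminorm ℝ ψ 2 w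
  have hs2 : s ^ 2 ≤ 1 := by nlinarith [abs_nonneg s, sq_abs s]
  have ht : 1 + t ^ 2 ≤ 3 * (1 + w ^ 2) := by nlinarith [sq_nonneg (w + s)]
  rw [← div_eq_mul_inv, le_div_iff₀ (by positivity)]
  nlinarith [mul_le_mul_of_nonneg_left ht (norm_nonneg (ψ w))]

end SchwartzMap

open SchwartzMap

/-- `rescaledConv ε f ψ = f ⋆ ψ_ε`, where `ψ_ε x = ε⁻¹ ψ (x / ε)`. -/
def rescaledConv (ε : ℝ) (f ψ : ℝ → ℂ) (x : ℝ) : ℂ :=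
  ∫ y, f (x - ε * y) * ψ y

section RescaledConv

variable {ε M : ℝ} {f : ℝ → ℂ}

theorem rescaledConv_eq_integral_comp_add (hε : ε ≠ 0) (f ψ : ℝ → ℂ) (x : ℝ) :
    rescaledConv ε f ψ x = ∫ t, f (-(ε * t)) * ψ (t + x / ε) := by
  rw [rescaledConv, ← integral_add_right_eq_self _ (x / ε)]
  congr 1 with t
  congr 2
  field_simp
  ring

theorem norm_rescaledConv_le (hM : ∀ z, ‖f z‖ ≤ M) (ψ : 𝓢(ℝ, ℂ)) (x : ℝ) :
    ‖rescaledConv ε f ψ x‖ ≤ M * ∫ y, ‖ψ y‖ := by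
  rw [← integral_const_mul]
  refine norm_integral_le_of_norm_le (ψ.integrable.norm.const_mul M) (.of_forall fun y => ?_)
  rw [norm_mul]
  exact mul_le_mul_of_nonneg_right (hM _) (norm_nonneg _)

theorem integrable_mul_comp_sub (hf : Continuous f) (hM : ∀ z, ‖f z‖ ≤ M) (ψ : 𝓢(ℝ, ℂ))
    (x : ℝ) : Integrable fun y => f (x - ε * y) * ψ y :=
  ψ.integrable.bdd_mul (hf.comp (by fun_prop)).aestronglyMeasurable (.of_forall fun _ => hM _)

theorem rescaledConv_sub {g : ℝ → ℂ} {M' : ℝ} (hf : Continuous f) (hM : ∀ z, ‖f z‖ ≤ M)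
    (hg : Continuous g) (hM' : ∀ z, ‖g z‖ ≤ M') (ψ : 𝓢(ℝ, ℂ)) (x : ℝ) :
    rescaledConv ε f ψ x - rescaledConv ε g ψ x = rescaledConv ε (f - g) ψ x := by
  rw [rescaledConv, rescaledConv, rescaledConv, ← integral_sub (integrable_mul_comp_sub hf hM ψ x)
    (integrable_mul_comp_sub hg hM' ψ x)]
  simp only [Pi.sub_apply, sub_mul]

theorem hasDerivAt_integral_mul_comp_add {g : ℝ → ℂ} (hg : AEStronglyMeasurable g)
    (hM : ∀ t, ‖g t‖ ≤ M) (ψ : 𝓢(ℝ, ℂ)) (s₀ : ℝ) :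
    HasDerivAt (fun s => ∫ t, g t * ψ (t + s)) (∫ t, g t * deriv ψ (t + s₀)) s₀ := by
  obtain ⟨D, hD⟩ := (derivCLM ℝ ℂ ψ).exists_norm_add_le_inv_one_add_sq
  have hM0 : 0 ≤ M := (norm_nonneg _).trans (hM 0)
  have hmeas (φ : ℝ → ℂ) (hφ : Continuous φ) (s : ℝ) :
      AEStronglyMeasurable fun t => g t * φ (t + s) :=
    hg.mul (hφ.comp (by fun_prop)).aestronglyMeasurable
  refine (hasDerivAt_integral_of_dominated_loc_of_deriv_le
    (F' := fun s t => g t * deriv ψ (t + s)) (bound := fun t => M * (D * (1 + (t + s₀) ^ 2)⁻¹))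
    (Metric.ball_mem_nhds s₀ one_pos)
    (.of_forall (hmeas ψ ψ.continuous))
    ((ψ.integrable.comp_add_right s₀).bdd_mul hg (.of_forall hM))
    (hmeas _ (derivCLM ℝ ℂ ψ).continuous s₀) (.of_forall fun t s hs => ?_)
    (((integrable_inv_one_add_sq.comp_add_right s₀).const_mul D).const_mul M)
    (.of_forall fun t s _ => ?_)).2
  · have hs' : |s - s₀| ≤ 1 := (Real.dist_eq s s₀ ▸ Metric.mem_ball.1 hs).le
    rw [norm_mul, show t + s = t + s₀ + (s - s₀) by ring]
    exact mul_le_mul (hM t) (hD _ _ hs') (norm_nonneg _) hM0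
  · exact ((ψ.hasDerivAt (t + s)).comp_const_add t s).const_mul (g t)

theorem hasDerivAt_rescaledConv (hf : Continuous f) (hM : ∀ z, ‖f z‖ ≤ M) (hε : ε ≠ 0)
    (ψ : 𝓢(ℝ, ℂ)) (x : ℝ) :
    HasDerivAt (rescaledConv ε f ψ) (ε⁻¹ • rescaledConv ε f (deriv ψ) x) x := by
  have hinner := (hasDerivAt_integral_mul_comp_add (hf.comp (by fun_prop)).aestronglyMeasurable
    (fun t => hM (-(ε * t))) ψ (x / ε)).scomp x ((hasDerivAt_id x).div_const ε)
  rw [one_div] at hinner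
  rw [funext (rescaledConv_eq_integral_comp_add hε f ψ), rescaledConv_eq_integral_comp_add hε]
  exact hinner

theorem AlmostPeriodic.rescaledConv (hf : AlmostPeriodic f) (hε : ε ≠ 0) (ψ : 𝓢(ℝ, ℂ)) :
    AlmostPeriodic (rescaledConv ε f ψ) := by
  obtain ⟨M, hM⟩ := hf.exists_norm_le
  refine ⟨continuous_iff_continuousAt.2 fun x =>
    (hasDerivAt_rescaledConv hf.1 hM hε ψ x).continuousAt, fun h => ?_⟩
  obtain ⟨φ, hφ, g, hg⟩ := hf.2 h
  have hfh (k : ℕ) : Continuous fun z => f (z + h (φ k)) := hf.1.comp (by fun_prop)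
  have hgc : Continuous g := hg.continuous (.of_forall hfh)
  have hgM (z : ℝ) : ‖g z‖ ≤ M := le_of_tendsto' (hg.tendsto_at z).norm fun _ => hM _
  refine ⟨φ, hφ, _root_.rescaledConv ε g ψ, Metric.tendstoUniformly_iff.2 fun δ hδ => ?_⟩
  set I := ∫ y, ‖ψ y‖
  have hI : 0 ≤ I := integral_nonneg fun _ => norm_nonneg _
  filter_upwards [Metric.tendstoUniformly_iff.1 hg (δ / (I + 1)) (by positivity)] with k hk x
  have htranslate : _root_.rescaledConv ε f ψ (x + h (φ k)) =
      _root_.rescaledConv ε (fun z => f (z + h (φ k))) ψ x := by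
    simp only [_root_.rescaledConv, sub_add_eq_add_sub]
  rw [htranslate, dist_eq_norm, rescaledConv_sub hgc hgM (hfh k) (fun _ => hM _)]
  calc _ ≤ δ / (I + 1) * I := norm_rescaledConv_le (fun z => (dist_eq_norm (g z) _ ▸ hk z).le) ψ x
    _ < δ / (I + 1) * (I + 1) := by gcongr; exact lt_add_one I
    _ = δ := div_mul_cancel₀ δ (by positivity)

end RescaledConv

def regularization (m : ℕ) (f : ℕ → ℝ → ℂ) (ε : ℝ) (ψ : ℝ → ℂ) (x : ℝ) : ℂ :=
  ∑ j ∈ Finset.range (m + 1), (ε ^ j)⁻¹ • rescaledConv ε (f j) (iteratedDeriv j ψ) x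

section Regularization

variable {m : ℕ} {f : ℕ → ℝ → ℂ} {ε : ℝ}

theorem hasDerivAt_regularization (hfc : ∀ j ≤ m, Continuous (f j))
    (hfb : ∀ j ≤ m, ∃ M, ∀ x, ‖f j x‖ ≤ M) (hε : ε ≠ 0) (ψ : 𝓢(ℝ, ℂ)) (x : ℝ) :
    HasDerivAt (regularization m f ε ψ) (ε⁻¹ • regularization m f ε (derivCLM ℝ ℂ ψ) x) x := by
  unfold regularization
  rw [Finset.smul_sum]
  refine HasDerivAt.fun_sum fun j hj => ?_
  have hjm : j ≤ m := Nat.lt_succ_iff.1 (Finset.mem_range.1 hj)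
  obtain ⟨M, hM⟩ := hfb j hjm
  have hψj := hasDerivAt_rescaledConv (hfc j hjm) hM hε ((derivCLM ℝ ℂ)^[j] ψ) x
  rw [coe_iterate_derivCLM, ← iteratedDeriv_succ, iteratedDeriv_succ'] at hψj
  rw [smul_comm]
  exact hψj.const_smul (ε ^ j)⁻¹

theorem iteratedDeriv_regularization (hfc : ∀ j ≤ m, Continuous (f j))
    (hfb : ∀ j ≤ m, ∃ M, ∀ x, ‖f j x‖ ≤ M) (hε : ε ≠ 0) (n : ℕ) (ψ : 𝓢(ℝ, ℂ)) :
    iteratedDeriv n (regularization m f ε ψ) =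
      (ε⁻¹) ^ n • regularization m f ε ((derivCLM ℝ ℂ)^[n] ψ) :=
  iteratedDeriv_eq_pow_smul_of_hasDerivAt (T := fun ψ : 𝓢(ℝ, ℂ) => regularization m f ε ψ)
    (hasDerivAt_regularization hfc hfb hε) n ψ

theorem AlmostPeriodic.regularization (hf : ∀ j ≤ m, AlmostPeriodic (f j)) (hε : ε ≠ 0)
    (ψ : 𝓢(ℝ, ℂ)) : AlmostPeriodic (regularization m f ε ψ) := by
  have hsum := AlmostPeriodic.sum fun j (hj : j ∈ Finset.range (m + 1)) =>
    (((hf j (Nat.lt_succ_iff.1 (Finset.mem_range.1 hj))).rescaledConv hε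
      ((derivCLM ℝ ℂ)^[j] ψ)).const_smul (ε ^ j)⁻¹)
  convert hsum using 1
  ext x
  simp only [_root_.regularization, coe_iterate_derivCLM, Finset.sum_apply, Pi.smul_apply]

theorem exists_norm_regularization_le (hfb : ∀ j ≤ m, ∃ M, ∀ x, ‖f j x‖ ≤ M) (ψ : 𝓢(ℝ, ℂ)) :
    ∃ C, ∀ ε ∈ Set.Ioc (0 : ℝ) 1, ∀ x, ‖regularization m f ε ψ x‖ ≤ C / ε ^ m := by
  have hB : ∀ j ∈ Finset.range (m + 1), ∃ B, ∀ ε x,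
      ‖rescaledConv ε (f j) (iteratedDeriv j ψ) x‖ ≤ B := by
    intro j hj
    obtain ⟨M, hM⟩ := hfb j (Nat.lt_succ_iff.1 (Finset.mem_range.1 hj))
    refine ⟨M * ∫ y, ‖((derivCLM ℝ ℂ)^[j] ψ) y‖, fun ε x => ?_⟩
    rw [← coe_iterate_derivCLM (𝕜 := ℝ)]
    exact norm_rescaledConv_le hM _ x
  choose! B hB using hB
  refine ⟨∑ j ∈ Finset.range (m + 1), B j, fun ε ⟨hε0, hε1⟩ x => ?_⟩
  rw [div_eq_inv_mul, Finset.mul_sum]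
  refine (norm_sum_le _ _).trans (Finset.sum_le_sum fun j hj => ?_)
  have hεj : (ε ^ j)⁻¹ ≤ (ε ^ m)⁻¹ := inv_anti₀ (pow_pos hε0 _)
    (pow_le_pow_of_le_one hε0.le hε1 (Nat.lt_succ_iff.1 (Finset.mem_range.1 hj)))
  rw [norm_smul, norm_inv, norm_pow, Real.norm_of_nonneg hε0.le]
  calc (ε ^ j)⁻¹ * ‖rescaledConv ε (f j) (iteratedDeriv j ψ) x‖
      ≤ (ε ^ m)⁻¹ * ‖rescaledConv ε (f j) (iteratedDeriv j ψ) x‖ := by gcongr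
    _ ≤ (ε ^ m)⁻¹ * B j := by gcongr; exact hB j hj ε x

theorem exists_norm_iteratedDeriv_regularization_le (hfc : ∀ j ≤ m, Continuous (f j))
    (hfb : ∀ j ≤ m, ∃ M, ∀ x, ‖f j x‖ ≤ M) (ψ : 𝓢(ℝ, ℂ)) (n : ℕ) :
    ∃ C, ∀ ε ∈ Set.Ioc (0 : ℝ) 1, ∀ x,
      ‖iteratedDeriv n (regularization m f ε ψ) x‖ ≤ C / ε ^ (n + m) := by
  obtain ⟨C, hC⟩ := exists_norm_regularization_le hfb ((derivCLM ℝ ℂ)^[n] ψ)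
  refine ⟨C, fun ε hε x => ?_⟩
  have hε0 : 0 < ε := hε.1
  rw [iteratedDeriv_regularization hfc hfb hε0.ne', Pi.smul_apply, norm_smul, norm_pow, norm_inv,
    Real.norm_of_nonneg hε0.le, inv_pow]
  calc (ε ^ n)⁻¹ * ‖regularization m f ε ((derivCLM ℝ ℂ)^[n] ψ) x‖
      ≤ (ε ^ n)⁻¹ * (C / ε ^ m) := by gcongr; exact hC ε hε x
    _ = C / ε ^ (n + m) := by field_simp; ring

end Regularization

theorem moderate_of_norm_iteratedDeriv_le {u : ℝ → ℝ → ℂ} (m : ℕ)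
    (h : ∀ i, ∃ C, ∀ ε ∈ Set.Ioc (0 : ℝ) 1, ∀ x, ‖iteratedDeriv i (u ε) x‖ ≤ C / ε ^ (i + m)) :
    Moderate u := by
  choose C hC using h
  intro k
  refine ⟨k + m, 1 + ∑ i ∈ Finset.range (k + 1), |C i|, by positivity, 1, ⟨one_pos, le_rfl⟩,
    fun ε hε _ => ?_⟩
  have hεk (i : ℕ) (hi : i ∈ Finset.range (k + 1)) : ε ^ (k + m) ≤ ε ^ (i + m) :=
    pow_le_pow_of_le_one hε.1.le hε.2 (by simpa [Nat.lt_succ_iff] using hi)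
  calc apSeminorm k (u ε)
      ≤ ∑ i ∈ Finset.range (k + 1), |C i| / ε ^ (k + m) :=
        Finset.sum_le_sum fun i hi => ciSup_le fun x => (hC i ε hε x).trans <|
          div_le_div₀ (abs_nonneg _) (le_abs_self _) (pow_pos hε.1 _) (hεk i hi)
    _ ≤ (1 + ∑ i ∈ Finset.range (k + 1), |C i|) / ε ^ (k + m) := by
        rw [← Finset.sum_div]
        exact div_le_div_of_nonneg_right (by linarith) (pow_pos hε.1 _).le

/-- regularizations of an almost periodic distribution `Σ_j f_j^{(j)}`
form a moderate net of elements of `𝓑_ap`. -/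
theorem regularization_moderate (m : ℕ) (f : ℕ → ℝ → ℂ)
    (hf : ∀ j ≤ m, AlmostPeriodic (f j)) (ρ : SchwartzMap ℝ ℂ) :
    (∀ ε ∈ Set.Ioc (0:ℝ) 1, BAp (fun x => ∑ j ∈ Finset.range (m + 1),
        (ε ^ j)⁻¹ • ∫ y : ℝ, f j (x - ε * y) * iteratedDeriv j (ρ : ℝ → ℂ) y)) ∧
      Moderate (fun ε x => ∑ j ∈ Finset.range (m + 1),
        (ε ^ j)⁻¹ • ∫ y : ℝ, f j (x - ε * y) * iteratedDeriv j (ρ : ℝ → ℂ) y) := by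
  change (∀ ε ∈ Set.Ioc (0:ℝ) 1, BAp (regularization m f ε ρ)) ∧
    Moderate fun ε => regularization m f ε ρ
  have hfc (j : ℕ) (hj : j ≤ m) : Continuous (f j) := (hf j hj).1
  have hfb (j : ℕ) (hj : j ≤ m) : ∃ M, ∀ x, ‖f j x‖ ≤ M := (hf j hj).exists_norm_le
  refine ⟨fun ε hε => ⟨?_, fun j => ?_⟩, moderate_of_norm_iteratedDeriv_le m
    (exists_norm_iteratedDeriv_regularization_le hfc hfb ρ)⟩
  · exact contDiff_of_hasDerivAt_smul (T := fun ψ : 𝓢(ℝ, ℂ) => regularization m f ε ψ)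
      (hasDerivAt_regularization hfc hfb hε.1.ne') ρ
  · rw [iteratedDeriv_regularization hfc hfb hε.1.ne']
    exact (AlmostPeriodic.regularization hf hε.1.ne' _).const_smul _
end
end

section
/- Let ρ : ℝ → ℂ be a Schwartz function with ∫_ℝ ρ(x) dx = 1 and ∫_ℝ x^k ρ(x) dx = 0 for every integer k ≥ 1, and set ρ_ε(x) = ε^{−1} ρ(x/ε) for ε ∈ (0,1]. If f belongs to 𝓑_ap, then the net (f * ρ_ε − f)_{ε∈(0,1]} is negligible: for every k ∈ ℕ and every m ∈ ℕ there exist C > 0 and ε₀ ∈ (0,1] such that |f * ρ_ε − f|_{k,∞} ≤ C ε^{m} for all ε ≤ ε₀. (Hence the canonical embedding of 𝓑_ap and the regularization embedding into 𝓖_ap coincide.) -/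
/-!
Substituting `y = ε z` gives `(f * ρ_ε)(x) = ∫ f(x - ε z) ρ(z) dz`, and derivatives in `x` pass
under this integral, so it suffices to bound `‖(g * ρ_ε)(x) - g(x)‖` for each `g = f^{(j)}`; all
derivatives of such a `g` are bounded because almost periodic functions are bounded. In
`t`, the function `F(t) = ∫ g(x - t z) ρ(z) dz` has `i`-th derivative
`∫ g^{(i)}(x - t z) (-z)^i ρ(z) dz`, which vanishes at `t = 0` for `i ≥ 1` by the moment
conditions. Taylor's estimate then gives
`‖F(t) - F(0)‖ ≤ sup ‖g^{(m+1)}‖ · ∫ |z|^{m+1} ‖ρ(z)‖ dz · t^{m+1} / (m+1)!`.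
-/

open Filter MeasureTheory Topology

noncomputable section

open scoped ContDiff Nat

theorem AlmostPeriodic.exists_bound {f : ℝ → ℂ} (hf : AlmostPeriodic f) :
    ∃ M : ℝ, ∀ x, ‖f x‖ ≤ M := by
  by_contra! hunb
  choose x hx using fun n : ℕ => hunb n
  obtain ⟨ν, hν, g, hg⟩ := hf.2 x
  -- Evaluating the uniform limit at `0` bounds `‖f (x (ν k))‖`, yet it exceeds `ν k ≥ k`.
  have hlim : Tendsto (fun k => ‖f (x (ν k))‖) atTop (𝓝 ‖g 0‖) := by
    simpa using (hg.tendsto_at 0).norm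
  obtain ⟨k, hk, hk'⟩ := ((hlim.eventually_lt_const (lt_add_one _)).and
    (tendsto_natCast_atTop_atTop.eventually_ge_atTop (‖g 0‖ + 1))).exists
  have hνk : (k : ℝ) ≤ ν k := by exact_mod_cast hν.le_apply
  linarith [hx (ν k)]

section TaylorBound

variable {E : Type*} [NormedAddCommGroup E] [NormedSpace ℝ E]

theorem norm_sub_le_of_norm_deriv_le_mul_pow {f f' : ℝ → E} {C t : ℝ} {n : ℕ} (ht : 0 ≤ t)
    (hf : ∀ s ∈ Set.Icc 0 t, HasDerivAt f (f' s) s)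
    (hbound : ∀ s ∈ Set.Icc 0 t, ‖f' s‖ ≤ C * s ^ n) :
    ‖f t - f 0‖ ≤ C * t ^ (n + 1) / (n + 1) := by
  have hB (s : ℝ) : HasDerivAt (fun s : ℝ => C * s ^ (n + 1) / (n + 1)) (C * s ^ n) s := by
    refine (((hasDerivAt_pow (n + 1) s).const_mul C).div_const _).congr_deriv ?_
    push_cast
    field_simp
  refine image_norm_le_of_norm_deriv_right_le_deriv_boundary (f := fun s => f s - f 0)
    (fun s hs => ((hf s hs).sub_const (f 0)).continuousAt.continuousWithinAt)
    (fun s hs => ((hf s (Set.Ico_subset_Icc_self hs)).sub_const (f 0)).hasDerivWithinAt)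
    (by simp) hB (fun s hs => hbound s (Set.Ico_subset_Icc_self hs)) ⟨ht, le_rfl⟩

theorem norm_sub_le_of_hasDerivAt_succ {F : ℕ → ℝ → E}
    (hF : ∀ i s, HasDerivAt (F i) (F (i + 1) s) s) (hF0 : ∀ i, 1 ≤ i → F i 0 = 0)
    {n : ℕ} {K : ℝ} (hK : ∀ s, ‖F (n + 1) s‖ ≤ K) {t : ℝ} (ht : 0 ≤ t) :
    ‖F 0 t - F 0 0‖ ≤ K * t ^ (n + 1) / (n + 1)! := by
  induction n generalizing F t with
  | zero =>
    simpa using norm_sub_le_of_norm_deriv_le_mul_pow (n := 0) ht (fun s _ => hF 0 s)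
      (fun s _ => by simpa using hK s)
  | succ n ih =>
    have hF1 (s : ℝ) (hs : 0 ≤ s) : ‖F 1 s‖ ≤ K / (n + 1)! * s ^ (n + 1) := by
      have := ih (F := fun i => F (i + 1)) (fun i s => hF (i + 1) s)
        (fun i _ => hF0 (i + 1) (by omega)) hK hs
      rw [zero_add, hF0 1 le_rfl, sub_zero] at this
      exact this.trans_eq (by ring)
    calc ‖F 0 t - F 0 0‖ ≤ K / (n + 1)! * t ^ (n + 1 + 1) / ((n + 1 : ℕ) + 1) :=
          norm_sub_le_of_norm_deriv_le_mul_pow ht (fun s _ => hF 0 s) (fun s hs => hF1 s hs.1)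
      _ = K * t ^ (n + 1 + 1) / (n + 1 + 1)! := by
          rw [Nat.factorial_succ (n + 1)]
          push_cast
          field_simp

end TaylorBound

theorem hasDerivAt_integral_comp_add_mul {g : ℝ → ℂ} (hg : ContDiff ℝ 1 g) {M M' : ℝ}
    (hM : ∀ t, ‖g t‖ ≤ M) (hM' : ∀ t, ‖deriv g t‖ ≤ M') {a b : ℝ → ℝ} (ha : Continuous a)
    (hb : Continuous b) {w : ℝ → ℂ} (hw : Integrable w)
    (hbw : Integrable fun z => ‖b z‖ * ‖w z‖) (s₀ : ℝ) :
    HasDerivAt (fun s => ∫ z, g (a z + s * b z) * w z)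
      (∫ z, deriv g (a z + s₀ * b z) * (b z * w z)) s₀ := by
  have hmeas {h : ℝ → ℂ} (hh : Continuous h) (s : ℝ) :
      AEStronglyMeasurable (fun z => h (a z + s * b z) * w z) :=
    (hh.comp (ha.add (continuous_const.mul hb))).aestronglyMeasurable.mul hw.1
  have hg' : Continuous (deriv g) := hg.continuous_deriv le_rfl
  refine (hasDerivAt_integral_of_dominated_loc_of_deriv_le
    (bound := fun z => M' * (‖b z‖ * ‖w z‖))
    (F' := fun s z => deriv g (a z + s * b z) * (b z * w z))
    Filter.univ_mem (Eventually.of_forall (hmeas hg.continuous))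
    ((hw.norm.const_mul M).mono' (hmeas hg.continuous s₀) (Eventually.of_forall fun z => ?_))
    (((hg'.comp (ha.add (continuous_const.mul hb))).aestronglyMeasurable.mul
      ((Complex.continuous_ofReal.comp hb).aestronglyMeasurable.mul hw.1)))
    (Eventually.of_forall fun z s _ => ?_) (hbw.const_mul M')
    (Eventually.of_forall fun z s _ => ?_)).2
  · rw [norm_mul]
    exact mul_le_mul_of_nonneg_right (hM _) (norm_nonneg _)
  · rw [norm_mul, norm_mul, Complex.norm_real]
    exact mul_le_mul_of_nonneg_right (hM' _) (by positivity)
  · have hin : HasDerivAt (fun s : ℝ => a z + s * b z) (b z) s := by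
      simpa using ((hasDerivAt_id s).mul_const (b z)).const_add (a z)
    have := ((hg.differentiable one_ne_zero _).hasDerivAt.scomp s hin).mul_const (w z)
    simpa [Function.comp_def, mul_comm, mul_assoc, mul_left_comm] using this

def scaledConv (g w : ℝ → ℂ) (t x : ℝ) : ℂ := ∫ z : ℝ, g (x - t * z) * w z

theorem integral_mul_dilate_eq_scaledConv (g w : ℝ → ℂ) {ε : ℝ} (hε : 0 < ε) (x : ℝ) :
    ∫ y : ℝ, g (x - y) * ((ε : ℂ)⁻¹ * w (y / ε)) = scaledConv g w ε x := by
  have hε' : (ε : ℂ) ≠ 0 := by exact_mod_cast hε.ne'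
  calc ∫ y : ℝ, g (x - y) * ((ε : ℂ)⁻¹ * w (y / ε))
      = (ε : ℂ)⁻¹ * ∫ y : ℝ, (fun z => g (x - ε * z) * w z) (y / ε) := by
        rw [← integral_const_mul]
        refine integral_congr_ae (Eventually.of_forall fun y => ?_)
        simp only [mul_div_cancel₀ y hε.ne']
        ring
    _ = scaledConv g w ε x := by
        rw [Measure.integral_comp_div (fun z => g (x - ε * z) * w z), abs_of_pos hε,
          Complex.real_smul, ← mul_assoc, inv_mul_cancel₀ hε', one_mul, scaledConv]

theorem scaledConv_zero_scale (g w : ℝ → ℂ) (x : ℝ) :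
    scaledConv g w 0 x = g x * ∫ z, w z := by
  simp [scaledConv, integral_const_mul]

theorem norm_scaledConv_le {g w : ℝ → ℂ} {M : ℝ} (hM : ∀ t, ‖g t‖ ≤ M) (hw : Integrable w)
    (t x : ℝ) : ‖scaledConv g w t x‖ ≤ M * ∫ z, ‖w z‖ := by
  rw [← integral_const_mul]
  refine norm_integral_le_of_norm_le (hw.norm.const_mul M) (Eventually.of_forall fun z => ?_)
  rw [norm_mul]
  exact mul_le_mul_of_nonneg_right (hM _) (norm_nonneg _)

section Derivatives

variable {g w : ℝ → ℂ} {M M' : ℝ}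

theorem hasDerivAt_scaledConv (hg : ContDiff ℝ 1 g) (hM : ∀ t, ‖g t‖ ≤ M)
    (hM' : ∀ t, ‖deriv g t‖ ≤ M') (hw : Integrable w) (t x : ℝ) :
    HasDerivAt (scaledConv g w t) (scaledConv (deriv g) w t x) x := by
  have := hasDerivAt_integral_comp_add_mul hg hM hM' (a := fun z => -(t * z)) (b := fun _ => 1)
    (by fun_prop) continuous_const hw (by simpa using hw.norm) x
  simp only [mul_one, Complex.ofReal_one, one_mul, neg_add_eq_sub] at this
  exact this

theorem hasDerivAt_scaledConv_param (hg : ContDiff ℝ 1 g) (hM : ∀ t, ‖g t‖ ≤ M)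
    (hM' : ∀ t, ‖deriv g t‖ ≤ M') (hw : Integrable w)
    (hzw : Integrable fun z => ‖z‖ * ‖w z‖) (x t : ℝ) :
    HasDerivAt (fun t => scaledConv g w t x)
      (scaledConv (deriv g) (fun z => -(z : ℂ) * w z) t x) t := by
  have := hasDerivAt_integral_comp_add_mul hg hM hM' (a := fun _ => x) (b := fun z => -z)
    continuous_const continuous_neg hw (by simpa using hzw) t
  simp only [mul_neg, ← sub_eq_add_neg, Complex.ofReal_neg] at this
  exact this

end Derivatives

theorem ContDiff.iteratedDeriv_of_infty {𝕜 F : Type*} [NontriviallyNormedField 𝕜]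
    [NormedAddCommGroup F] [NormedSpace 𝕜 F] {f : 𝕜 → F} (hf : ContDiff 𝕜 ∞ f) (i : ℕ) :
    ContDiff 𝕜 ∞ (iteratedDeriv i f) := by
  rw [iteratedDeriv_eq_iterate]
  exact hf.iterate_deriv i

theorem iteratedDeriv_iteratedDeriv {𝕜 F : Type*} [NontriviallyNormedField 𝕜]
    [NormedAddCommGroup F] [NormedSpace 𝕜 F] (f : 𝕜 → F) (i j : ℕ) :
    iteratedDeriv i (iteratedDeriv j f) = iteratedDeriv (i + j) f := by
  simp only [iteratedDeriv_eq_iterate, Function.iterate_add_apply]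

theorem iteratedDeriv_scaledConv_sub {g w : ℝ → ℂ} (hg : ContDiff ℝ ∞ g)
    (hbdd : ∀ i, ∃ M, ∀ t, ‖iteratedDeriv i g t‖ ≤ M) (hw : Integrable w) (t : ℝ) (j : ℕ) :
    iteratedDeriv j (fun x => scaledConv g w t x - g x) =
      fun x => scaledConv (iteratedDeriv j g) w t x - iteratedDeriv j g x := by
  induction j with
  | zero => simp
  | succ j ih =>
    obtain ⟨M, hM⟩ := hbdd j
    obtain ⟨M', hM'⟩ := hbdd (j + 1)
    rw [iteratedDeriv_succ] at hM'
    have hgj : ContDiff ℝ 1 (iteratedDeriv j g) := (hg.iteratedDeriv_of_infty j).of_le (by simp)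
    ext x
    rw [iteratedDeriv_succ, ih, iteratedDeriv_succ]
    exact ((hasDerivAt_scaledConv hgj hM hM' hw t x).sub
      (hgj.differentiable one_ne_zero x).hasDerivAt).deriv

theorem norm_scaledConv_sub_le (ρ : SchwartzMap ℝ ℂ) (h1 : ∫ x : ℝ, ρ x = 1)
    (hmom : ∀ k : ℕ, 1 ≤ k → ∫ x : ℝ, (x : ℂ) ^ k * ρ x = 0) {g : ℝ → ℂ} (hg : ContDiff ℝ ∞ g)
    (hbdd : ∀ i, ∃ M, ∀ t, ‖iteratedDeriv i g t‖ ≤ M) {m : ℕ} {M : ℝ}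
    (hM : ∀ t, ‖iteratedDeriv (m + 1) g t‖ ≤ M) (x : ℝ) {t : ℝ} (ht : 0 ≤ t) :
    ‖scaledConv g ρ t x - g x‖ ≤
      M * (∫ z, ‖z‖ ^ (m + 1) * ‖ρ z‖) * t ^ (m + 1) / (m + 1)! := by
  set F : ℕ → ℝ → ℂ :=
    fun i t => scaledConv (iteratedDeriv i g) (fun z => (-(z : ℂ)) ^ i * ρ z) t x
  have hnorm (i : ℕ) (z : ℝ) : ‖(-(z : ℂ)) ^ i * ρ z‖ = ‖z‖ ^ i * ‖ρ z‖ := by simp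
  have hint (i : ℕ) : Integrable fun z : ℝ => (-(z : ℂ)) ^ i * ρ z :=
    (ρ.integrable_pow_mul volume i).mono' (by fun_prop)
      (Eventually.of_forall fun z => (hnorm i z).le)
  have hF (i : ℕ) (s : ℝ) : HasDerivAt (F i) (F (i + 1) s) s := by
    obtain ⟨Mi, hMi⟩ := hbdd i
    obtain ⟨Mi', hMi'⟩ := hbdd (i + 1)
    rw [iteratedDeriv_succ] at hMi'
    have := hasDerivAt_scaledConv_param ((hg.iteratedDeriv_of_infty i).of_le (by simp)) hMi hMi'
      (hint i) (by simpa only [hnorm, ← mul_assoc, ← pow_succ'] using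
        ρ.integrable_pow_mul volume (i + 1)) x s
    convert this using 2
    · rw [iteratedDeriv_succ]
    · funext z
      ring
  have hF0 (i : ℕ) (hi : 1 ≤ i) : F i 0 = 0 := by
    have hmom' : ∫ z : ℝ, (-(z : ℂ)) ^ i * ρ z = (-1) ^ i * ∫ z : ℝ, (z : ℂ) ^ i * ρ z := by
      rw [← integral_const_mul]
      congr 1 with z
      ring
    simp only [F, scaledConv_zero_scale, hmom', hmom i hi, mul_zero]
  have hK (s : ℝ) : ‖F (m + 1) s‖ ≤ M * ∫ z, ‖z‖ ^ (m + 1) * ‖ρ z‖ := by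
    simpa only [hnorm] using norm_scaledConv_le hM (hint (m + 1)) s x
  simpa [F, scaledConv_zero_scale, h1] using norm_sub_le_of_hasDerivAt_succ hF hF0 hK ht

theorem apSeminorm_le {k : ℕ} {u : ℝ → ℂ} {c : ℕ → ℝ}
    (h : ∀ j ≤ k, ∀ x, ‖iteratedDeriv j u x‖ ≤ c j) :
    apSeminorm k u ≤ ∑ j ∈ Finset.range (k + 1), c j :=
  Finset.sum_le_sum fun j hj => ciSup_le (h j (Nat.lt_succ_iff.mp (Finset.mem_range.mp hj)))

/-- for `f ∈ 𝓑_ap` and `ρ ∈ Σ`, the net `(f * ρ_ε - f)_ε` is negligible,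
so the canonical and regularization embeddings of `𝓑_ap` into `𝓖_ap` coincide. -/
theorem embedding_commutes (ρ : SchwartzMap ℝ ℂ)
    (h1 : ∫ x : ℝ, ρ x = 1)
    (hmom : ∀ k : ℕ, 1 ≤ k → ∫ x : ℝ, (x : ℂ) ^ k * ρ x = 0)
    (f : ℝ → ℂ) (hf : BAp f) :
    Negligible (fun ε x =>
      (∫ y : ℝ, f (x - y) * ((ε : ℂ)⁻¹ * ρ (y / ε))) - f x) := by
  intro k m
  obtain ⟨hsmooth, hap⟩ := hf
  choose M hM using fun j => (hap j).exists_bound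
  have hbdd (j : ℕ) : ∀ i, ∃ M', ∀ t, ‖iteratedDeriv i (iteratedDeriv j f) t‖ ≤ M' :=
    fun i => ⟨M (i + j), by simpa only [iteratedDeriv_iteratedDeriv] using hM (i + j)⟩
  set c : ℕ → ℝ := fun j => M (m + 1 + j) * (∫ z, ‖z‖ ^ (m + 1) * ‖ρ z‖) / (m + 1)!
  have hc (j : ℕ) : 0 ≤ c j := by
    have := (norm_nonneg _).trans (hM (m + 1 + j) 0)
    positivity
  refine ⟨max 1 (∑ j ∈ Finset.range (k + 1), c j), lt_max_of_lt_left one_pos, 1,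
    ⟨one_pos, le_rfl⟩, fun ε ⟨hε, hε1⟩ _ => ?_⟩
  simp only [integral_mul_dilate_eq_scaledConv _ _ hε]
  calc apSeminorm k (fun x => scaledConv f ρ ε x - f x)
      ≤ ∑ j ∈ Finset.range (k + 1), c j * ε ^ m := apSeminorm_le fun j _ x => by
        rw [iteratedDeriv_scaledConv_sub hsmooth (fun i => ⟨M i, hM i⟩) ρ.integrable]
        calc _ ≤ c j * ε ^ (m + 1) :=
              (norm_scaledConv_sub_le ρ h1 hmom (hsmooth.iteratedDeriv_of_infty j) (hbdd j)
                (by simpa only [iteratedDeriv_iteratedDeriv] using hM (m + 1 + j)) x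
                hε.le).trans_eq (by ring)
          _ ≤ c j * ε ^ m :=
              mul_le_mul_of_nonneg_left (pow_le_pow_of_le_one hε.le hε1 m.le_succ) (hc j)
    _ ≤ max 1 (∑ j ∈ Finset.range (k + 1), c j) * ε ^ m := by
        rw [← Finset.sum_mul]
        exact mul_le_mul_of_nonneg_right (le_max_right _ _) (by positivity)
end
end

section
/- Let l ∈ ℕ and f_0, …, f_l ∈ L¹(ℝ, ℂ). If (u_ε)_{ε∈(0,1]} is a negligible net of elements of 𝓑_ap, then the net w_ε(x) = Σ_{i≤l} (u_ε^{(i)} * f_i)(x) is negligible. Consequently, convolution with the integrable distribution Σ_i f_i^{(i)} is well defined on the quotient 𝓖_ap, independently of the chosen representative. -/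
open Filter MeasureTheory Topology

noncomputable section

/-!
Differentiation passes under the integral sign, since every derivative of `u_ε` is almost
periodic and hence bounded, while `f_i` is integrable. Thus the `j`-th derivative of `w_ε` is
`Σ_{i ≤ l} u_ε^{(i+j)} * f_i`, and Young's bound `‖g * f‖_∞ ≤ ‖g‖_∞ ‖f‖_1` gives
`|w_ε|_{k,∞} ≤ (k + 1) (Σ_{i ≤ l} ‖f_i‖_1) |u_ε|_{k+l,∞}`: the loss of `l` derivatives does not
affect negligibility.
-/

open scoped ContDiff

theorem AlmostPeriodic.exists_norm_le_s12 {f : ℝ → ℂ} (h : AlmostPeriodic f) :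
    ∃ M : ℝ, ∀ x, ‖f x‖ ≤ M := by
  by_contra! hunbdd
  choose x hx using fun n : ℕ => hunbdd n
  obtain ⟨φ, hφ, g, hg⟩ := h.2 x
  have hlim : Tendsto (fun k => ‖f (0 + x (φ k))‖) atTop (𝓝 ‖g 0‖) := (hg.tendsto_at 0).norm
  refine not_tendsto_atTop_of_tendsto_nhds hlim
    (tendsto_atTop_mono (fun k => ?_) tendsto_natCast_atTop_atTop)
  calc (k : ℝ) ≤ φ k := mod_cast hφ.id_le k
    _ ≤ ‖f (0 + x (φ k))‖ := by simpa using (hx (φ k)).le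

theorem norm_iteratedDeriv_le_apSeminorm {v : ℝ → ℂ} {n k : ℕ}
    (hv : BddAbove (Set.range fun x => ‖iteratedDeriv n v x‖)) (hn : n ≤ k) (x : ℝ) :
    ‖iteratedDeriv n v x‖ ≤ apSeminorm k v :=
  (le_ciSup hv x).trans <| Finset.single_le_sum (f := fun j => ⨆ x, ‖iteratedDeriv j v x‖)
    (fun _ _ => Real.iSup_nonneg fun _ => norm_nonneg _) (Finset.mem_range_succ_iff.2 hn)

theorem apSeminorm_le_of_norm_iteratedDeriv_le {w : ℝ → ℂ} {k : ℕ} {A : ℝ}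
    (hw : ∀ j ≤ k, ∀ x, ‖iteratedDeriv j w x‖ ≤ A) : apSeminorm k w ≤ (k + 1) * A :=
  calc apSeminorm k w ≤ ∑ _j ∈ Finset.range (k + 1), A :=
        Finset.sum_le_sum fun j hj => ciSup_le (hw j (Finset.mem_range_succ_iff.1 hj))
    _ = (k + 1) * A := by simp

section Convolution

variable {f g : ℝ → ℂ}

theorem norm_integral_comp_sub_mul_le (hf : Integrable f) {M : ℝ} (hg : ∀ x, ‖g x‖ ≤ M)
    (x : ℝ) : ‖∫ y, g (x - y) * f y‖ ≤ M * ∫ y, ‖f y‖ := by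
  rw [← integral_const_mul]
  refine norm_integral_le_of_norm_le (hf.norm.const_mul M) (Eventually.of_forall fun y => ?_)
  rw [norm_mul]
  exact mul_le_mul_of_nonneg_right (hg _) (norm_nonneg _)

theorem hasDerivAt_integral_comp_sub_mul (hf : Integrable f) (hg : Differentiable ℝ g)
    {M₀ M₁ : ℝ} (hg₀ : ∀ x, ‖g x‖ ≤ M₀) (hg₁ : ∀ x, ‖deriv g x‖ ≤ M₁) (x₀ : ℝ) :
    HasDerivAt (fun x => ∫ y, g (x - y) * f y) (∫ y, deriv g (x₀ - y) * f y) x₀ := by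
  have hcomp : ∀ x, AEStronglyMeasurable (fun y => g (x - y)) :=
    fun x => (hg.continuous.comp (continuous_sub_left x)).aestronglyMeasurable
  refine (hasDerivAt_integral_of_dominated_loc_of_deriv_le
    (F' := fun x y => deriv g (x - y) * f y) (bound := fun y => M₁ * ‖f y‖)
    (Metric.ball_mem_nhds x₀ one_pos)
    (Eventually.of_forall fun x => (hcomp x).mul hf.aestronglyMeasurable)
    (hf.bdd_mul (hcomp x₀) (Eventually.of_forall fun y => hg₀ _))
    (((measurable_deriv g).comp (measurable_const.sub measurable_id)).aestronglyMeasurable.mul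
      hf.aestronglyMeasurable)
    (Eventually.of_forall fun y x _ => ?_) (hf.norm.const_mul M₁)
    (Eventually.of_forall fun y x _ => ?_)).2
  · rw [norm_mul]
    exact mul_le_mul_of_nonneg_right (hg₁ _) (norm_nonneg _)
  · exact ((hg (x - y)).hasDerivAt.comp_sub_const x y).mul_const (f y)

theorem hasDerivAt_integral_iteratedDeriv_comp_sub_mul {v : ℝ → ℂ} (hv : ContDiff ℝ ∞ v)
    (hbdd : ∀ n, ∃ M, ∀ x, ‖iteratedDeriv n v x‖ ≤ M) (hf : Integrable f) (n : ℕ) (x₀ : ℝ) :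
    HasDerivAt (fun x => ∫ y, iteratedDeriv n v (x - y) * f y)
      (∫ y, iteratedDeriv (n + 1) v (x₀ - y) * f y) x₀ := by
  obtain ⟨M₀, hM₀⟩ := hbdd n
  obtain ⟨M₁, hM₁⟩ := hbdd (n + 1)
  rw [iteratedDeriv_succ] at hM₁ ⊢
  exact hasDerivAt_integral_comp_sub_mul hf
    (hv.differentiable_iteratedDeriv n (mod_cast WithTop.coe_lt_top _)) hM₀ hM₁ x₀

end Convolution

theorem iteratedDeriv_sum_integral_iteratedDeriv_comp_sub_mul {v : ℝ → ℂ}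
    (hv : ContDiff ℝ ∞ v) (hbdd : ∀ n, ∃ M, ∀ x, ‖iteratedDeriv n v x‖ ≤ M)
    {s : Finset ℕ} {f : ℕ → ℝ → ℂ} (hf : ∀ i ∈ s, Integrable (f i)) (j : ℕ) :
    iteratedDeriv j (fun x => ∑ i ∈ s, ∫ y, iteratedDeriv i v (x - y) * f i y) =
      fun x => ∑ i ∈ s, ∫ y, iteratedDeriv (i + j) v (x - y) * f i y := by
  induction j with
  | zero => simp
  | succ j ih =>
    ext x
    rw [iteratedDeriv_succ, ih]
    exact (HasDerivAt.fun_sum fun i hi =>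
      hasDerivAt_integral_iteratedDeriv_comp_sub_mul hv hbdd (hf i hi) (i + j) x).deriv

theorem apSeminorm_sum_integral_iteratedDeriv_comp_sub_mul_le {v : ℝ → ℂ}
    (hv : ContDiff ℝ ∞ v) (hbdd : ∀ n, ∃ M, ∀ x, ‖iteratedDeriv n v x‖ ≤ M)
    {l : ℕ} {f : ℕ → ℝ → ℂ} (hf : ∀ i ≤ l, Integrable (f i)) (k : ℕ) :
    apSeminorm k (fun x => ∑ i ∈ Finset.range (l + 1), ∫ y, iteratedDeriv i v (x - y) * f i y) ≤
      (k + 1) * (apSeminorm (k + l) v * ∑ i ∈ Finset.range (l + 1), ∫ y, ‖f i y‖) := by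
  have hf' : ∀ i ∈ Finset.range (l + 1), Integrable (f i) :=
    fun i hi => hf i (Finset.mem_range_succ_iff.1 hi)
  refine apSeminorm_le_of_norm_iteratedDeriv_le fun j hj x => ?_
  rw [iteratedDeriv_sum_integral_iteratedDeriv_comp_sub_mul hv hbdd hf' j, Finset.mul_sum]
  refine (norm_sum_le _ _).trans (Finset.sum_le_sum fun i hi => ?_)
  obtain ⟨M, hM⟩ := hbdd (i + j)
  have hil := Finset.mem_range_succ_iff.1 hi
  exact norm_integral_comp_sub_mul_le (hf' i hi)
    (norm_iteratedDeriv_le_apSeminorm ⟨M, Set.forall_mem_range.2 hM⟩ (by omega)) x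

/-- convolution with an integrable distribution `Σ_{i ≤ l} f_i^{(i)}`
maps negligible nets to negligible nets, hence is well defined on `𝓖_ap`. -/
theorem gap_conv_integrable_negligible (l : ℕ) (f : ℕ → ℝ → ℂ)
    (hf : ∀ i ≤ l, Integrable (f i))
    (u : ℝ → ℝ → ℂ) (hu_ap : ∀ ε ∈ Set.Ioc (0:ℝ) 1, BAp (u ε)) (hu : Negligible u) :
    Negligible (fun ε x => ∑ i ∈ Finset.range (l + 1),
      ∫ y : ℝ, iteratedDeriv i (u ε) (x - y) * f i y) := by
  intro k m
  obtain ⟨C, hC, ε₀, hε₀, hu_le⟩ := hu (k + l) m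
  set B := ∑ i ∈ Finset.range (l + 1), ∫ y, ‖f i y‖
  have hB : 0 ≤ B := Finset.sum_nonneg fun i _ => integral_nonneg fun y => norm_nonneg _
  refine ⟨(k + 1) * (C * (B + 1)), by positivity, ε₀, hε₀, fun ε hε hεε₀ => ?_⟩
  have hε_pow : 0 ≤ ε ^ m := pow_nonneg hε.1.le m
  calc _ ≤ (k + 1) * (apSeminorm (k + l) (u ε) * B) :=
        apSeminorm_sum_integral_iteratedDeriv_comp_sub_mul_le (hu_ap ε hε).1
          (fun n => ((hu_ap ε hε).2 n).exists_norm_le_s12) hf k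
    _ ≤ (k + 1) * (C * ε ^ m * (B + 1)) := by gcongr; exacts [hu_le ε hε hεε₀, by linarith]
    _ = (k + 1) * (C * (B + 1)) * ε ^ m := by ring
end
end

section
/- Generalized Bohl–Bohr theorem: let (u_ε)_{ε∈(0,1]} be a moderate net of elements of 𝓑_ap, fix x₀ ∈ ℝ, and define the primitives U_ε(x) = ∫_{x₀}^{x} u_ε(t) dt. Then the following are equivalent: (i) each U_ε belongs to 𝓑_ap and the net (U_ε)_{ε∈(0,1]} is moderate; (ii) each U_ε is bounded on ℝ and there exist m ∈ ℕ, C > 0 and ε₀ ∈ (0,1] such that sup_{x∈ℝ} |U_ε(x)| ≤ C ε^{−m} for all ε ≤ ε₀. -/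
open Filter MeasureTheory Topology

noncomputable section

/-!
Differentiation shifts the seminorms, `|U|_{k+1,∞} = sup |U| + |u|_{k,∞}`, so moderateness of the
primitives reduces to the bound on `sup |U_ε|`, and `U_ε ∈ 𝓑_ap` reduces to almost periodicity of
`U_ε` itself: the classical Bohl–Bohr theorem.

For the latter, let `F` be a bounded primitive of an almost periodic `f`. Given translations `h_n`,
pass to a subsequence along which `f (· + h_n) → g` uniformly and (`F` being bounded and Lipschitz)
`F (· + h_n) → G` pointwise. If the convergence were not uniform, there would be points `s_n` with
`‖G s_n - F (s_n + h_n)‖ ≥ ε`. Further extractions give limits `H` of `F (· + s_n + h_n)` and `K` of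
`G (· + s_n)`, primitives of one function, so `H = K + c`, and a limit `P = F + c'` of
`K (· - s_n - h_n)`. All these take values in the closure of the range of `F`, and a bounded set is
translated into its own closure only by `0`; hence `c' = 0`, then `c = 0`, contradicting
`‖H 0 - K 0‖ ≥ ε`.
-/

open Set Bornology

section Translates

variable {E : Type*} [NormedAddCommGroup E]

theorem TendstoUniformly.comp_tendsto {ι ι' α β : Type*} [UniformSpace β] {F : ι → α → β}
    {f : α → β} {p : Filter ι} {p' : Filter ι'} (h : TendstoUniformly F f p) {φ : ι' → ι}
    (hφ : Tendsto φ p' p) : TendstoUniformly (fun k => F (φ k)) f p' :=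
  fun u hu => hφ.eventually (h u hu)

theorem range_subset_closure_range_of_tendsto_translate {α : Type*} [TopologicalSpace α]
    {F G : ℝ → α} {b : ℕ → ℝ} (h : ∀ x, Tendsto (fun n => F (x + b n)) atTop (𝓝 (G x))) :
    range G ⊆ closure (range F) := by
  rintro _ ⟨x, rfl⟩
  exact mem_closure_of_tendsto (h x) (Eventually.of_forall fun n => mem_range_self _)

theorem TendstoUniformly.translate_sub {f g g' : ℝ → E} {a s : ℕ → ℝ}
    (ha : TendstoUniformly (fun n x => f (x + a n)) g atTop)
    (hsa : TendstoUniformly (fun n x => f (x + (s n + a n))) g' atTop) :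
    TendstoUniformly (fun n x => g (x + s n)) g' atTop := by
  rw [Metric.tendstoUniformly_iff] at ha hsa ⊢
  intro δ hδ
  filter_upwards [ha (δ / 2) (by positivity), hsa (δ / 2) (by positivity)] with n han hsan x
  calc dist (g' x) (g (x + s n))
      ≤ dist (g' x) (f (x + (s n + a n))) + dist (g (x + s n)) (f (x + (s n + a n))) :=
        dist_triangle_right _ _ _
    _ < δ / 2 + δ / 2 :=
        add_lt_add (hsan x) (by simpa only [add_assoc] using han (x + s n))
    _ = δ := add_halves δ

theorem LipschitzWith.exists_subseq_tendsto_translate [ProperSpace E] {F : ℝ → E} {L : NNReal}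
    (hL : LipschitzWith L F) (hF : IsBounded (range F)) (b : ℕ → ℝ) :
    ∃ φ : ℕ → ℕ, StrictMono φ ∧ ∃ G : ℝ → E,
      ∀ x, Tendsto (fun k => F (x + b (φ k))) atTop (𝓝 (G x)) := by
  obtain ⟨M, hM⟩ := isBounded_iff_forall_norm_le.1 hF
  obtain ⟨w, -, φ, hφ, hw⟩ :=
    (isCompact_univ_pi fun _ : ℚ => isCompact_closedBall (0 : E) M).tendsto_subseq
      (x := fun n (q : ℚ) => F (q + b n)) fun n q _ => by simpa using hM _ (mem_range_self _)
  have hcauchy_rat (q : ℚ) : CauchySeq fun k => F (q + b (φ k)) :=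
    (tendsto_pi_nhds.1 hw q).cauchySeq
  -- the translates are uniformly `L`-Lipschitz, so Cauchy on `ℚ` propagates to `ℝ`
  have hcauchy (x : ℝ) : CauchySeq fun k => F (x + b (φ k)) := by
    rw [Metric.cauchySeq_iff]
    intro ε hε
    obtain ⟨q, hq⟩ := exists_rat_near x (show 0 < ε / (3 * (L + 1)) by positivity)
    obtain ⟨N, hN⟩ := Metric.cauchySeq_iff.1 (hcauchy_rat q) (ε / 3) (by positivity)
    have hclose (k : ℕ) : dist (F (x + b (φ k))) (F (q + b (φ k))) < ε / 3 :=
      calc _ ≤ L * dist (x + b (φ k)) (q + b (φ k)) := hL.dist_le_mul _ _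
        _ = L * |x - q| := by rw [Real.dist_eq, add_sub_add_right_eq_sub]
        _ ≤ (L + 1) * |x - q| := by gcongr; linarith
        _ < (L + 1) * (ε / (3 * (L + 1))) := by gcongr
        _ = ε / 3 := by field_simp
    refine ⟨N, fun m hm n hn => ?_⟩
    calc _ ≤ dist (F (x + b (φ m))) (F (q + b (φ m))) + dist (F (q + b (φ m))) (F (q + b (φ n)))
          + dist (F (q + b (φ n))) (F (x + b (φ n))) := dist_triangle4 _ _ _ _
      _ < ε / 3 + ε / 3 + ε / 3 := by
          gcongr
          · exact hclose m
          · exact hN m hm n hn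
          · exact dist_comm (F (x + b (φ n))) _ ▸ hclose n
      _ = ε := by ring
  choose G hG using fun x => cauchySeq_tendsto_of_complete (hcauchy x)
  exact ⟨φ, hφ, G, hG⟩

theorem eq_zero_of_range_add_subset_closure_range [NormedSpace ℝ E] {F : ℝ → E} {c : E}
    (hF : IsBounded (range F)) (hc : range (fun x => F x + c) ⊆ closure (range F)) : c = 0 := by
  set S := closure (range F)
  have hS : ∀ y ∈ S, y + c ∈ S := by
    have : (· + c) '' S ⊆ S := by
      refine (image_closure_subset_closure_image (continuous_add_const c)).trans ?_
      rw [← range_comp]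
      exact closure_minimal hc isClosed_closure
    exact fun y hy => this (mem_image_of_mem _ hy)
  have hn : ∀ n : ℕ, F 0 + n • c ∈ S := by
    intro n
    induction n with
    | zero => simpa using subset_closure (mem_range_self 0)
    | succ n ih => simpa [succ_nsmul, add_assoc] using hS _ ih
  obtain ⟨R, hR⟩ := isBounded_iff_forall_norm_le.1 hF.closure
  by_contra hc0
  obtain ⟨n, hn'⟩ := exists_nat_gt ((R + ‖F 0‖) / ‖c‖)
  have hnc : (n : ℝ) * ‖c‖ ≤ R + ‖F 0‖ := by
    calc (n : ℝ) * ‖c‖ = ‖n • c‖ := by rw [RCLike.norm_nsmul ℝ, nsmul_eq_mul]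
      _ = ‖(F 0 + n • c) - F 0‖ := by rw [add_sub_cancel_left]
      _ ≤ ‖F 0 + n • c‖ + ‖F 0‖ := norm_sub_le _ _
      _ ≤ R + ‖F 0‖ := by gcongr; exact hR _ (hn n)
  rw [div_lt_iff₀ (norm_pos_iff.2 hc0)] at hn'
  linarith

end Translates

section Primitive

variable {E : Type*} [NormedAddCommGroup E] [NormedSpace ℝ E]

def IsPrimitive (F f : ℝ → E) : Prop :=
  ∀ a b, F b - F a = ∫ t in a..b, f t

theorem isPrimitive_intervalIntegral {f : ℝ → E} (hf : Continuous f) (x₀ : ℝ) :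
    IsPrimitive (fun x => ∫ t in x₀..x, f t) f := fun _ _ =>
  intervalIntegral.integral_interval_sub_left (hf.intervalIntegrable _ _)
    (hf.intervalIntegrable _ _)

theorem IsPrimitive.eq_add_const {F G f : ℝ → E} (hF : IsPrimitive F f) (hG : IsPrimitive G f)
    (x : ℝ) : F x = G x + (F 0 - G 0) := by
  have h : F x - F 0 = G x - G 0 := (hF 0 x).trans (hG 0 x).symm
  calc F x = (F x - F 0) + F 0 := (sub_add_cancel _ _).symm
    _ = G x + (F 0 - G 0) := by rw [h]; abel

theorem IsPrimitive.lipschitzWith {F f : ℝ → E} {M : ℝ} (hF : IsPrimitive F f)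
    (hf : ∀ x, ‖f x‖ ≤ M) : LipschitzWith M.toNNReal F :=
  LipschitzWith.of_dist_le' fun x y => by
    rw [dist_eq_norm, hF y x, Real.dist_eq]
    exact intervalIntegral.norm_integral_le_of_norm_le_const fun t _ => hf t

theorem IsPrimitive.of_tendsto_translate {F f G g : ℝ → E} {b : ℕ → ℝ} (hF : IsPrimitive F f)
    (hf : Continuous f) (hfg : TendstoUniformly (fun n x => f (x + b n)) g atTop)
    (hFG : ∀ x, Tendsto (fun n => F (x + b n)) atTop (𝓝 (G x))) : IsPrimitive G g := by
  intro a c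
  have hshift : ∀ n, F (c + b n) - F (a + b n) = ∫ t in a..c, f (t + b n) := fun n => by
    rw [intervalIntegral.integral_comp_add_right, hF]
  refine tendsto_nhds_unique ((hFG c).sub (hFG a)) ?_
  simp_rw [hshift]
  exact hfg.tendstoUniformlyOn.tendsto_intervalIntegral_of_continuousOn
    (Eventually.of_forall fun n => (hf.comp (continuous_add_const _)).continuousOn)

structure IsBoundedPrimitive (F f : ℝ → E) : Prop where
  isPrimitive : IsPrimitive F f
  continuous : Continuous f
  isBounded : IsBounded (range f)
  isBounded_primitive : IsBounded (range F)

theorem IsBoundedPrimitive.exists_subseq_tendsto_translate [ProperSpace E] {F f g : ℝ → E}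
    {b : ℕ → ℝ} (hF : IsBoundedPrimitive F f)
    (hfg : TendstoUniformly (fun n x => f (x + b n)) g atTop) :
    ∃ φ : ℕ → ℕ, StrictMono φ ∧ ∃ G : ℝ → E,
      (∀ x, Tendsto (fun k => F (x + b (φ k))) atTop (𝓝 (G x))) ∧ IsBoundedPrimitive G g ∧
        range G ⊆ closure (range F) := by
  obtain ⟨M, hM⟩ := isBounded_iff_forall_norm_le.1 hF.isBounded
  obtain ⟨φ, hφ, G, hG⟩ := (hF.isPrimitive.lipschitzWith fun x => hM _ (mem_range_self x))
    |>.exists_subseq_tendsto_translate hF.isBounded_primitive b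
  have hGF := range_subset_closure_range_of_tendsto_translate hG
  refine ⟨φ, hφ, G, hG, ⟨?_, ?_, ?_, hF.isBounded_primitive.closure.subset hGF⟩, hGF⟩
  · exact hF.isPrimitive.of_tendsto_translate hF.continuous
      (hfg.comp_tendsto hφ.tendsto_atTop) hG
  · exact hfg.continuous (Frequently.of_forall fun n => hF.continuous.comp (continuous_add_const _))
  · exact hF.isBounded.closure.subset
      (range_subset_closure_range_of_tendsto_translate fun x => hfg.tendsto_at x)

theorem IsPrimitive.eq_of_range_subset_closure {F P H K f g : ℝ → E} (hF : IsPrimitive F f)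
    (hP : IsPrimitive P f) (hH : IsPrimitive H g) (hK : IsPrimitive K g)
    (hFb : IsBounded (range F)) (hHF : range H ⊆ closure (range F))
    (hKF : range K ⊆ closure (range F)) (hPK : range P ⊆ closure (range K)) : H = K := by
  have hPF : P = F := by
    have hc : P 0 - F 0 = 0 := by
      refine eq_zero_of_range_add_subset_closure_range hFb ?_
      calc range (fun x => F x + (P 0 - F 0)) = range P := by simp_rw [← hP.eq_add_const hF]
        _ ⊆ closure (range K) := hPK
        _ ⊆ closure (range F) := closure_minimal hKF isClosed_closure
    funext x
    rw [hP.eq_add_const hF x, hc, add_zero]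
  have hc : H 0 - K 0 = 0 := by
    refine eq_zero_of_range_add_subset_closure_range (hFb.closure.subset hKF) ?_
    calc range (fun x => K x + (H 0 - K 0)) = range H := by simp_rw [← hH.eq_add_const hK]
      _ ⊆ closure (range P) := hPF ▸ hHF
      _ ⊆ closure (range K) := closure_minimal hPK isClosed_closure
  funext x
  rw [hH.eq_add_const hK x, hc, add_zero]

end Primitive

section BohlBohr

theorem AlmostPeriodic.isBounded_range {f : ℝ → ℂ} (hf : AlmostPeriodic f) :
    IsBounded (range f) := by
  by_contra hunb
  have hlarge (n : ℕ) : ∃ x, (n : ℝ) < ‖f x‖ := by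
    by_contra! h
    exact hunb (isBounded_iff_forall_norm_le.2 ⟨n, forall_mem_range.2 h⟩)
  choose xs hxs using hlarge
  obtain ⟨φ, hφ, g, hg⟩ := hf.2 xs
  obtain ⟨C, hC⟩ :=
    isBounded_iff_forall_norm_le.1 (Metric.isBounded_range_of_tendsto _ (hg.tendsto_at 0))
  obtain ⟨k, hk⟩ := exists_nat_gt C
  have hφk : (k : ℝ) ≤ φ k := by exact_mod_cast hφ.le_apply
  have hCk : ‖f (xs (φ k))‖ ≤ C := by simpa using hC _ (mem_range_self k)
  linarith [hxs (φ k)]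

theorem AlmostPeriodic.exists_subseq_tendsto_dist_translate {f F gf G : ℝ → ℂ} {a : ℕ → ℝ}
    (hf : AlmostPeriodic f) (hF : IsBoundedPrimitive F f)
    (hfa : TendstoUniformly (fun n x => f (x + a n)) gf atTop)
    (hG : IsBoundedPrimitive G gf) (hGF : range G ⊆ closure (range F)) (s : ℕ → ℝ) :
    ∃ σ : ℕ → ℕ, StrictMono σ ∧
      Tendsto (fun k => dist (G (s (σ k))) (F (s (σ k) + a (σ k)))) atTop (𝓝 0) := by
  obtain ⟨θ₁, hθ₁, g, hg⟩ := hf.2 fun n => s n + a n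
  obtain ⟨θ₂, hθ₂, H, hH, hHp, hHF⟩ := hF.exists_subseq_tendsto_translate hg
  have hτ : StrictMono (θ₁ ∘ θ₂) := hθ₁.comp hθ₂
  have hgτ := hg.comp_tendsto hθ₂.tendsto_atTop
  obtain ⟨θ₃, hθ₃, K, hK, hKp, hKG⟩ := hG.exists_subseq_tendsto_translate
    ((hfa.comp_tendsto hτ.tendsto_atTop).translate_sub hgτ)
  have hσ : StrictMono (θ₁ ∘ θ₂ ∘ θ₃) := hτ.comp hθ₃
  have hback : TendstoUniformly
      (fun k x => g (x + -(s (θ₁ (θ₂ (θ₃ k))) + a (θ₁ (θ₂ (θ₃ k)))))) f atTop :=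
    (hgτ.comp_tendsto hθ₃.tendsto_atTop).translate_sub <|
      Metric.tendstoUniformly_iff.2 fun δ hδ => Eventually.of_forall fun _ _ => by simpa using hδ
  obtain ⟨ρ, -, P, -, hPp, hPK⟩ := hKp.exists_subseq_tendsto_translate hback
  have hHK : H = K := hF.isPrimitive.eq_of_range_subset_closure hPp.isPrimitive hHp.isPrimitive
    hKp.isPrimitive hF.isBounded_primitive hHF
    (hKG.trans (closure_minimal hGF isClosed_closure)) hPK
  refine ⟨θ₁ ∘ θ₂ ∘ θ₃, hσ, ?_⟩
  simpa [hHK] using (hK 0).dist ((hH 0).comp hθ₃.tendsto_atTop)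

/-- The classical Bohl–Bohr theorem. -/
theorem AlmostPeriodic.of_isPrimitive {f F : ℝ → ℂ} (hf : AlmostPeriodic f)
    (hF : IsPrimitive F f) (hFb : IsBounded (range F)) : AlmostPeriodic F := by
  have hF' : IsBoundedPrimitive F f := ⟨hF, hf.1, hf.isBounded_range, hFb⟩
  obtain ⟨M, hM⟩ := isBounded_iff_forall_norm_le.1 hf.isBounded_range
  refine ⟨(hF.lipschitzWith fun x => hM _ (mem_range_self x)).continuous, fun h => ?_⟩
  obtain ⟨φ₁, hφ₁, gf, hgf⟩ := hf.2 h
  obtain ⟨φ₂, hφ₂, G, hG, hGp, hGF⟩ := hF'.exists_subseq_tendsto_translate hgf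
  refine ⟨φ₁ ∘ φ₂, hφ₁.comp hφ₂, G, Metric.tendstoUniformly_iff.2 fun ε hε => ?_⟩
  by_contra hfar
  obtain ⟨ψ, hψ, hfar⟩ := extraction_of_frequently_atTop (not_eventually.1 hfar)
  push Not at hfar
  choose s hs using hfar
  obtain ⟨σ, -, hσ⟩ := hf.exists_subseq_tendsto_dist_translate hF'
    (hgf.comp_tendsto (hφ₂.comp hψ).tendsto_atTop) hGp hGF s
  have := ge_of_tendsto hσ (Eventually.of_forall fun k => hs (σ k))
  linarith

end BohlBohr

section Generalized

theorem BAp.almostPeriodic {f : ℝ → ℂ} (hf : BAp f) : AlmostPeriodic f := by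
  simpa using hf.2 0

theorem BAp.of_deriv {F f : ℝ → ℂ} (hF : Differentiable ℝ F) (hderiv : deriv F = f) (hf : BAp f)
    (hFap : AlmostPeriodic F) : BAp F := by
  refine ⟨contDiff_infty_iff_deriv.2 ⟨hF, hderiv ▸ hf.1⟩, fun j => ?_⟩
  cases j with
  | zero => simpa using hFap
  | succ j => simpa [iteratedDeriv_succ', hderiv] using hf.2 j

theorem apSeminorm_zero (f : ℝ → ℂ) : apSeminorm 0 f = ⨆ x, ‖f x‖ := by
  simp [apSeminorm]

theorem norm_le_apSeminorm_zero {f : ℝ → ℂ} (hf : IsBounded (range f)) (x : ℝ) :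
    ‖f x‖ ≤ apSeminorm 0 f := by
  obtain ⟨C, hC⟩ := isBounded_iff_forall_norm_le.1 hf
  rw [apSeminorm_zero]
  exact le_ciSup ⟨C, forall_mem_range.2 fun y => hC _ (mem_range_self y)⟩ x

theorem apSeminorm_le_succ (k : ℕ) (f : ℝ → ℂ) : apSeminorm k f ≤ apSeminorm (k + 1) f := by
  rw [apSeminorm, apSeminorm, Finset.sum_range_succ _ (k + 1)]
  exact le_add_of_nonneg_right (Real.iSup_nonneg fun x => norm_nonneg _)

theorem apSeminorm_le_of_deriv {F f : ℝ → ℂ} (hderiv : deriv F = f) (k : ℕ) :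
    apSeminorm k F ≤ (⨆ x, ‖F x‖) + apSeminorm k f := by
  refine (apSeminorm_le_succ k F).trans_eq ?_
  rw [apSeminorm, Finset.sum_range_succ', add_comm]
  simp [apSeminorm, iteratedDeriv_succ', hderiv]

theorem div_pow_le_div_pow_of_le {ε C : ℝ} (hε : ε ∈ Ioc 0 1) (hC : 0 ≤ C) {m n : ℕ}
    (hmn : m ≤ n) : C / ε ^ m ≤ C / ε ^ n :=
  div_le_div_of_nonneg_left hC (pow_pos hε.1 n) (pow_le_pow_of_le_one hε.1.le hε.2 hmn)

theorem Moderate.of_deriv {U u : ℝ → ℝ → ℂ} (hderiv : ∀ ε ∈ Ioc (0 : ℝ) 1, deriv (U ε) = u ε)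
    (hu : Moderate u) (hU : ∃ m : ℕ, ∃ C > (0 : ℝ), ∃ ε₀ ∈ Ioc (0 : ℝ) 1,
      ∀ ε ∈ Ioc (0 : ℝ) 1, ε ≤ ε₀ → ∀ x, ‖U ε x‖ ≤ C / ε ^ m) : Moderate U := by
  intro k
  obtain ⟨m, C, hC, ε₀, hε₀, hUb⟩ := hU
  obtain ⟨m', C', hC', ε₀', hε₀', hub⟩ := hu k
  refine ⟨max m m', C + C', by positivity, min ε₀ ε₀', ⟨lt_min hε₀.1 hε₀'.1,
    (min_le_left _ _).trans hε₀.2⟩, fun ε hε hεle => ?_⟩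
  calc apSeminorm k (U ε) ≤ (⨆ x, ‖U ε x‖) + apSeminorm k (u ε) :=
        apSeminorm_le_of_deriv (hderiv ε hε) k
    _ ≤ C / ε ^ m + C' / ε ^ m' := by
        gcongr
        · exact Real.iSup_le (hUb ε hε (hεle.trans (min_le_left _ _))) (by positivity [hε.1])
        · exact hub ε hε (hεle.trans (min_le_right _ _))
    _ ≤ C / ε ^ max m m' + C' / ε ^ max m m' :=
        add_le_add (div_pow_le_div_pow_of_le hε hC.le (le_max_left _ _))
          (div_pow_le_div_pow_of_le hε hC'.le (le_max_right _ _))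
    _ = (C + C') / ε ^ max m m' := (add_div _ _ _).symm

end Generalized

/-- generalized Bohl–Bohr theorem: the primitive of an almost periodic
generalized function is almost periodic iff it is a bounded generalized function. -/
theorem generalized_bohl_bohr (u : ℝ → ℝ → ℂ)
    (hu_ap : ∀ ε ∈ Set.Ioc (0:ℝ) 1, BAp (u ε)) (hu : Moderate u) (x₀ : ℝ) :
    ((∀ ε ∈ Set.Ioc (0:ℝ) 1, BAp (fun x => ∫ t in x₀..x, u ε t)) ∧
        Moderate (fun ε x => ∫ t in x₀..x, u ε t)) ↔
      ((∀ ε ∈ Set.Ioc (0:ℝ) 1, ∃ C : ℝ, ∀ x : ℝ, ‖∫ t in x₀..x, u ε t‖ ≤ C) ∧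
        ∃ m : ℕ, ∃ C > (0:ℝ), ∃ ε₀ ∈ Set.Ioc (0:ℝ) 1, ∀ ε ∈ Set.Ioc (0:ℝ) 1, ε ≤ ε₀ →
          ∀ x : ℝ, ‖∫ t in x₀..x, u ε t‖ ≤ C / ε ^ m) := by
  have hcont (ε : ℝ) (hε : ε ∈ Ioc (0 : ℝ) 1) : Continuous (u ε) := (hu_ap ε hε).1.continuous
  constructor
  · rintro ⟨hU, hmod⟩
    have hbdd (ε : ℝ) (hε : ε ∈ Ioc (0 : ℝ) 1) :=
      (hU ε hε).almostPeriodic.isBounded_range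
    obtain ⟨m, C, hC, ε₀, hε₀, hbound⟩ := hmod 0
    refine ⟨fun ε hε => ?_, m, C, hC, ε₀, hε₀, fun ε hε hεle x =>
      (norm_le_apSeminorm_zero (hbdd ε hε) x).trans (hbound ε hε hεle)⟩
    obtain ⟨C, hC⟩ := isBounded_iff_forall_norm_le.1 (hbdd ε hε)
    exact ⟨C, fun x => hC _ (mem_range_self x)⟩
  · rintro ⟨hbdd, hmod⟩
    have hderiv (ε : ℝ) (hε : ε ∈ Ioc (0 : ℝ) 1) :
        deriv (fun x => ∫ t in x₀..x, u ε t) = u ε :=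
      funext ((hcont ε hε).deriv_integral _ x₀)
    refine ⟨fun ε hε => ?_, Moderate.of_deriv hderiv hu hmod⟩
    obtain ⟨C, hC⟩ := hbdd ε hε
    refine (hu_ap ε hε).of_deriv (fun x => ?_) (hderiv ε hε) ?_
    · exact ((hcont ε hε).integral_hasStrictDerivAt x₀ x).hasDerivAt.differentiableAt
    · exact (hu_ap ε hε).almostPeriodic.of_isPrimitive
        (isPrimitive_intervalIntegral (hcont ε hε) x₀)
        (isBounded_iff_forall_norm_le.2 ⟨C, forall_mem_range.2 hC⟩)
end
end

section
/- Let (u_ε)_{ε∈(0,1]} be a negligible net of elements of 𝓑_ap, and suppose that for each ε ∈ (0,1] there is ℓ_ε ∈ ℂ such that (1/X) ∫_0^X u_ε(x) dx → ℓ_ε as X → +∞. Then for every m ∈ ℕ there exist C > 0 and ε₀ ∈ (0,1] such that |ℓ_ε| ≤ C ε^{m} for all ε ≤ ε₀ (i.e. the generalized mean value vanishes in the ring of generalized complex numbers, so the mean value is well defined on 𝓖_ap). -/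
open Filter MeasureTheory Topology

noncomputable section

/-- An almost periodic function is bounded. -/
lemma almostPeriodic_bddAbove (f : ℝ → ℂ) (hap : AlmostPeriodic f) :
    BddAbove (Set.range fun x => ‖f x‖) := by
  by_contra hb
  have hex : ∀ n : ℕ, ∃ x : ℝ, (n : ℝ) < ‖f x‖ := by
    intro n
    by_contra hc
    push_neg at hc
    exact hb ⟨n, by rintro y ⟨x, rfl⟩; exact hc x⟩
  choose h hh using hex
  obtain ⟨φ, hφ, g, hg⟩ := hap.2 h
  have h0 : Tendsto (fun k => f (0 + h (φ k))) atTop (nhds (g 0)) := hg.tendsto_at 0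
  have hnorm : Tendsto (fun k => ‖f (0 + h (φ k))‖) atTop (nhds ‖g 0‖) := h0.norm
  have hub : Tendsto (fun k : ℕ => ‖f (0 + h (φ k))‖) atTop atTop := by
    apply tendsto_atTop_mono (fun k => ?_) (tendsto_natCast_atTop_atTop.comp hφ.tendsto_atTop)
    simpa using (hh (φ k)).le
  exact not_tendsto_atTop_of_tendsto_nhds hnorm hub

/-- the generalized mean value of a negligible net vanishes in the ring
of generalized complex numbers, hence the mean value is well defined on `𝓖_ap`. -/
theorem mean_value_negligible (u : ℝ → ℝ → ℂ)
    (hu_ap : ∀ ε ∈ Set.Ioc (0:ℝ) 1, BAp (u ε)) (hu : Negligible u)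
    (ℓ : ℝ → ℂ)
    (hmean : ∀ ε ∈ Set.Ioc (0:ℝ) 1,
      Tendsto (fun X : ℝ => (X : ℂ)⁻¹ * ∫ x in (0:ℝ)..X, u ε x) atTop (nhds (ℓ ε))) :
    ∀ m : ℕ, ∃ C > (0:ℝ), ∃ ε₀ ∈ Set.Ioc (0:ℝ) 1,
      ∀ ε ∈ Set.Ioc (0:ℝ) 1, ε ≤ ε₀ → ‖ℓ ε‖ ≤ C * ε ^ m := by
  intro m
  obtain ⟨C, hC, ε₀, hε₀, hbound⟩ := hu 0 m
  refine ⟨C, hC, ε₀, hε₀, fun ε hε hεle => ?_⟩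
  have hap : AlmostPeriodic (u ε) := by
    have := (hu_ap ε hε).2 0
    rwa [iteratedDeriv_zero] at this
  have hbdd : BddAbove (Set.range fun x => ‖u ε x‖) := almostPeriodic_bddAbove _ hap
  set M : ℝ := ⨆ x : ℝ, ‖u ε x‖ with hM
  have hle : ∀ x : ℝ, ‖u ε x‖ ≤ M := fun x => le_ciSup hbdd x
  -- ‖ℓ ε‖ ≤ M
  have hℓM : ‖ℓ ε‖ ≤ M := by
    refine le_of_tendsto ((hmean ε hε).norm) ?_
    filter_upwards [eventually_gt_atTop (0:ℝ)] with X hX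
    have hint : ‖∫ x in (0:ℝ)..X, u ε x‖ ≤ M * |X - 0| :=
      intervalIntegral.norm_integral_le_of_norm_le_const (fun x _ => hle x)
    have hX' : |X - 0| = X := by rw [sub_zero, abs_of_pos hX]
    rw [norm_mul]
    have : ‖(X:ℂ)⁻¹‖ = X⁻¹ := by
      rw [norm_inv, Complex.norm_real, Real.norm_of_nonneg hX.le]
    rw [this]
    calc X⁻¹ * ‖∫ x in (0:ℝ)..X, u ε x‖ ≤ X⁻¹ * (M * X) := by
          apply mul_le_mul_of_nonneg_left _ (inv_nonneg.mpr hX.le)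
          rw [hX'] at hint; exact hint
      _ = M := by field_simp
  -- M = apSeminorm 0 (u ε)
  have hMs : M = apSeminorm 0 (u ε) := by
    simp [apSeminorm, Finset.sum_range_one, iteratedDeriv_zero, hM]
  exact hℓM.trans (hMs ▸ hbound ε hε hεle)
end
end

section
/- Compatibility of means: let f : ℝ → ℂ be a bounded almost periodic (Bochner) function admitting a uniform mean M ∈ ℂ, i.e. (1/X) ∫_0^X f(x + a) dx → M as X → +∞, uniformly in a ∈ ℝ. Then for every g ∈ L¹(ℝ, ℂ), the convolution f * g admits the mean M · ∫_ℝ g, i.e. (1/X) ∫_0^X (f * g)(x) dx → M · ∫_ℝ g(y) dy as X → +∞. In particular, for ρ with ∫ρ = 1 the mean of each regularization f * ρ_ε equals the mean of f. -/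
open Filter MeasureTheory Topology

noncomputable section

/-! By Fubini, the mean of `f * g` over `[0, X]` is `∫ (X⁻¹ ∫₀ˣ f (x - y) dx) g(y) dy`. The inner
means converge to `M` uniformly in `y`, hence stay bounded, and dominated convergence gives the
limit `M ∫ g`. -/

section

variable {α : Type*} [MeasurableSpace α] {μ : Measure α} {𝕜 : Type*} [RCLike 𝕜]

theorem tendsto_integral_mul_of_tendstoUniformly {ι : Type*} {l : Filter ι}
    [l.IsCountablyGenerated] {F : ι → α → 𝕜} {c : 𝕜} {g : α → 𝕜}
    (hF : TendstoUniformly F (fun _ => c) l) (hF_meas : ∀ᶠ i in l, AEStronglyMeasurable (F i) μ)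
    (hg : Integrable g μ) :
    Tendsto (fun i => ∫ y, F i y * g y ∂μ) l (𝓝 (c * ∫ y, g y ∂μ)) := by
  rw [← integral_const_mul]
  refine tendsto_integral_filter_of_dominated_convergence (fun y => (‖c‖ + 1) * ‖g y‖)
    (hF_meas.mono fun i hi => hi.mul hg.1) ?_ (hg.norm.const_mul _)
    (ae_of_all _ fun y => ((hF.tendsto_at y).mul_const (g y)))
  filter_upwards [Metric.tendstoUniformly_iff.mp hF 1 one_pos] with i hi
  refine ae_of_all _ fun y => ?_
  have hFc : ‖F i y‖ ≤ ‖c‖ + 1 := by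
    have := norm_le_norm_add_norm_sub' (F i y) c
    rw [← dist_eq_norm, dist_comm] at this
    linarith [hi y]
  rw [norm_mul]
  gcongr

end

section

variable {G : Type*} [AddGroup G] [MeasurableSpace G] [MeasurableSub₂ G] {𝕜 : Type*} [RCLike 𝕜]
  {μ ν : Measure G} [IsFiniteMeasure μ] {f g : G → 𝕜}

theorem integrable_prod_sub_mul {C : ℝ} (hf : StronglyMeasurable f) (hC : ∀ x, ‖f x‖ ≤ C)
    (hg : Integrable g ν) :
    Integrable (fun p : G × G => f (p.1 - p.2) * g p.2) (μ.prod ν) := by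
  refine ((integrable_const C).mul_prod hg.norm).mono'
    ((hf.comp_measurable measurable_sub).aestronglyMeasurable.mul hg.1.comp_snd)
    (ae_of_all _ fun p => ?_)
  rw [norm_mul]
  gcongr
  exact hC _

theorem integral_integral_sub_mul_swap [SFinite ν] {C : ℝ} (hf : StronglyMeasurable f)
    (hC : ∀ x, ‖f x‖ ≤ C) (hg : Integrable g ν) :
    ∫ x, ∫ y, f (x - y) * g y ∂ν ∂μ = ∫ y, (∫ x, f (x - y) ∂μ) * g y ∂ν := by
  rw [integral_integral_swap (integrable_prod_sub_mul hf hC hg)]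
  simp only [integral_mul_const]

end

/-- compatibility of means: if a bounded almost periodic function `f` has
uniform mean `M`, then for any `g ∈ L¹` the convolution `f * g` has mean `M · ∫ g`. -/
theorem mean_conv_compat (f : ℝ → ℂ) (hf : AlmostPeriodic f)
    (hbd : ∃ C : ℝ, ∀ x : ℝ, ‖f x‖ ≤ C) (M : ℂ)
    (hM : TendstoUniformly
      (fun (X : ℝ) (a : ℝ) => (X : ℂ)⁻¹ * ∫ x in (0:ℝ)..X, f (x + a))
      (fun _ => M) atTop)
    (g : ℝ → ℂ) (hg : Integrable g) :
    Tendsto (fun X : ℝ => (X : ℂ)⁻¹ * ∫ x in (0:ℝ)..X, ∫ y : ℝ, f (x - y) * g y)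
      atTop (nhds (M * ∫ y : ℝ, g y)) := by
  obtain ⟨C, hC⟩ := hbd
  have hfc : Continuous f := hf.1
  have hmean : TendstoUniformly (fun (X : ℝ) (y : ℝ) => (X : ℂ)⁻¹ * ∫ x in (0:ℝ)..X, f (x - y))
      (fun _ => M) atTop := by
    simpa only [Function.comp_def, sub_eq_add_neg] using hM.comp Neg.neg
  have hmeas (X : ℝ) :
      AEStronglyMeasurable (fun y : ℝ => (X : ℂ)⁻¹ * ∫ x in (0:ℝ)..X, f (x - y)) :=
    (continuous_const.mul (intervalIntegral.continuous_parametric_intervalIntegral_of_continuous'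
      (by fun_prop) 0 X)).aestronglyMeasurable
  refine (tendsto_integral_mul_of_tendstoUniformly hmean (Eventually.of_forall hmeas) hg).congr' ?_
  filter_upwards [eventually_ge_atTop 0] with X hX
  rw [intervalIntegral.integral_of_le hX, integral_integral_sub_mul_swap hfc.stronglyMeasurable hC hg,
    ← integral_const_mul]
  simp only [intervalIntegral.integral_of_le hX, mul_assoc]
end
end
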